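/- arXiv:2602.19210 — 4 statements merged into one kernel-verified Lean document; each statement's English description precedes it below -/
import Mathlib

section
/- Let K be a flow kernel on [0,T], let A : [0,T] → ℝ^{d×d} and g : [0,T] → ℝ^d be continuous and let ζ ∈ ℝ^d. Then the backward Volterra equation y_t = K(T,t)ᵀ ζ + ∫_t^T K(s,t)ᵀ (g_s + A_sᵀ y_s) ds has exactly one continuous solution y : [0,T] → ℝ^d. -/
open MeasureTheory Matrix Set

noncomputable section

abbrev Mat (d : ℕ) := Matrix (Fin d) (Fin d) ℝ
abbrev Vec (d : ℕ) := Fin d → ℝ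

/-- A flow kernel on `[0,T]`. -/
structure IsFlowKernel (T : ℝ) (d : ℕ) (K : ℝ → ℝ → Mat d) : Prop where
  diag : ∀ t ∈ Icc (0:ℝ) T, K t t = 1
  flow : ∀ s ∈ Icc (0:ℝ) T, ∀ u ∈ Icc (0:ℝ) T, ∀ t ∈ Icc (0:ℝ) T, K t s = K t u * K u s
  cont : ContinuousOn (fun t => K t 0) (Icc (0:ℝ) T)

/-- A map whose iterate is a contraction has a unique fixed point. -/
theorem exists_fixedPt_of_iterate {α : Type*} [MetricSpace α] [CompleteSpace α] [Nonempty α]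
    {f : α → α} {n : ℕ} {C : NNReal} (h : ContractingWith C (f^[n])) :
    ∃ x, Function.IsFixedPt f x ∧ ∀ y, Function.IsFixedPt f y → y = x := by
  refine ⟨h.fixedPoint _, ?_, fun y hy => h.fixedPoint_unique (hy.iterate n)⟩
  have hfix : Function.IsFixedPt (f^[n]) (h.fixedPoint _) := h.fixedPoint_isFixedPt
  have h2 : Function.IsFixedPt (f^[n]) (f (h.fixedPoint _)) := by
    show f^[n] (f _) = f _
    rw [← Function.iterate_succ_apply, Function.iterate_succ_apply', hfix]
  exact h.fixedPoint_unique h2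

/-- the backward Volterra equation
`y t = K(T,t)ᵀ ζ + ∫ₜᵀ K(s,t)ᵀ (g s + A sᵀ y s) ds` has exactly one continuous
solution on `[0,T]`. -/
theorem backward_volterra_existence_uniqueness
    (T : ℝ) (hT : 0 < T) (d : ℕ) (K : ℝ → ℝ → Mat d) (hK : IsFlowKernel T d K)
    (A : ℝ → Mat d) (hA : ContinuousOn A (Icc (0:ℝ) T))
    (g : ℝ → Vec d) (hg : ContinuousOn g (Icc (0:ℝ) T)) (ζ : Vec d) :
    ∃ y : ℝ → Vec d,
      (ContinuousOn y (Icc (0:ℝ) T) ∧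
        ∀ t ∈ Icc (0:ℝ) T,
          y t = (K T t)ᵀ *ᵥ ζ + ∫ s in t..T, (K s t)ᵀ *ᵥ (g s + (A s)ᵀ *ᵥ y s)) ∧
      ∀ z : ℝ → Vec d,
        (ContinuousOn z (Icc (0:ℝ) T) ∧
          ∀ t ∈ Icc (0:ℝ) T,
            z t = (K T t)ᵀ *ᵥ ζ + ∫ s in t..T, (K s t)ᵀ *ᵥ (g s + (A s)ᵀ *ᵥ z s)) →
        ∀ t ∈ Icc (0:ℝ) T, z t = y t := by
  have hT' : (0 : ℝ) ≤ T := hT.le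
  have h0 : (0:ℝ) ∈ Icc (0:ℝ) T := ⟨le_refl _, hT'⟩
  have hTm : T ∈ Icc (0:ℝ) T := ⟨hT', le_refl _⟩
  -- projection onto [0,T]
  set pr : ℝ → ℝ := fun t => (projIcc (0:ℝ) T hT' t : ℝ) with hpr_def
  have hpr_mem : ∀ t, pr t ∈ Icc (0:ℝ) T := fun t => (projIcc (0:ℝ) T hT' t).2
  have hpr_id : ∀ t ∈ Icc (0:ℝ) T, pr t = t := fun t ht => by
    simp [hpr_def, projIcc_of_mem hT' ht]
  have hpr_cont : Continuous pr := continuous_subtype_val.comp continuous_projIcc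
  -- extended coefficient functions
  set Ae : ℝ → Mat d := fun t => A (pr t) with hAe_def
  set ge : ℝ → Vec d := fun t => g (pr t) with hge_def
  set P : ℝ → Mat d := fun t => K (pr t) 0 with hP_def
  set Q : ℝ → Mat d := fun t => K 0 (pr t) with hQ_def
  have hAe_cont : Continuous Ae := hA.comp_continuous hpr_cont hpr_mem
  have hge_cont : Continuous ge := hg.comp_continuous hpr_cont hpr_mem
  have hP_cont : Continuous P := hK.cont.comp_continuous hpr_cont hpr_mem
  have hPQ : ∀ t, P t * Q t = 1 := fun t => by
    have h1 := hK.flow (pr t) (hpr_mem t) 0 h0 (pr t) (hpr_mem t)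
    have h2 := hK.diag (pr t) (hpr_mem t)
    rw [hP_def, hQ_def, ← h1, h2]
  have hQP : ∀ t, Q t * P t = 1 := fun t => by
    have h1 := hK.flow 0 h0 (pr t) (hpr_mem t) 0 h0
    have h2 := hK.diag 0 h0
    rw [hQ_def, hP_def, ← h1, h2]
  have hQ_inv : ∀ t, Q t = (P t)⁻¹ := fun t => (inv_eq_right_inv (hPQ t)).symm
  have hPdet : ∀ t, (P t).det ≠ 0 := fun t => by
    intro h
    have := congrArg Matrix.det (hPQ t)
    rw [Matrix.det_mul, h, zero_mul, Matrix.det_one] at this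
    exact zero_ne_one this
  have hQ_cont : Continuous Q := by
    have : Q = fun t => ((P t).det)⁻¹ • (P t).adjugate := by
      funext t
      rw [hQ_inv t, Matrix.inv_def, Ring.inverse_eq_inv']
    rw [this]
    exact ((hP_cont.matrix_det).inv₀ hPdet).smul hP_cont.matrix_adjugate
  -- K s t = P s * Q t on [0,T]²
  have hKfact : ∀ s ∈ Icc (0:ℝ) T, ∀ t ∈ Icc (0:ℝ) T, K s t = P s * Q t := by
    intro s hs t ht
    have h := hK.flow t ht 0 h0 s hs
    show K s t = K (pr s) 0 * K 0 (pr t)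
    rw [hpr_id s hs, hpr_id t ht]
    exact h
  -- mulVec as a continuous linear map
  set k : Mat d → (Vec d →L[ℝ] Vec d) :=
    fun M => LinearMap.toContinuousLinearMap (Matrix.toLin' M) with hk_def
  have hk_apply : ∀ M v, k M v = M *ᵥ v := fun M v => Matrix.toLin'_apply M v
  have hk_cont : Continuous k := by
    have : IsLinearMap ℝ k := by
      constructor
      · intro M N; ext v i
        simp [hk_def]
      · intro c M; ext v i
        simp [hk_def]
    exact (IsLinearMap.mk' k this).continuous_of_finiteDimensional
  -- the space of continuous maps
  haveI : Nonempty C(Icc (0:ℝ) T, Vec d) := ⟨⟨fun _ => 0, continuous_const⟩⟩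
  -- extension of elements
  set ext : C(Icc (0:ℝ) T, Vec d) → ℝ → Vec d := fun y => IccExtend hT' y with hext_def
  have hext_cont : ∀ y, Continuous (ext y) := fun y => y.continuous.Icc_extend'
  have hext_eq : ∀ (y : C(Icc (0:ℝ) T, Vec d)) (t : ℝ) (ht : t ∈ Icc (0:ℝ) T),
      ext y t = y ⟨t, ht⟩ := fun y t ht => IccExtend_of_mem hT' y ht
  -- integrand
  set G : C(Icc (0:ℝ) T, Vec d) → ℝ → Vec d :=
    fun y s => k ((P s)ᵀ) (ge s + k ((Ae s)ᵀ) (ext y s)) with hG_def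
  have hG_cont : ∀ y, Continuous (G y) := by
    intro y
    apply Continuous.clm_apply (hk_cont.comp hP_cont.matrix_transpose)
    exact hge_cont.add
      (Continuous.clm_apply (hk_cont.comp hAe_cont.matrix_transpose) (hext_cont y))
  have hG_int : ∀ y a b, IntervalIntegrable (G y) volume a b :=
    fun y a b => (hG_cont y).intervalIntegrable a b
  -- the Picard operator
  have hΦ_cont : ∀ y : C(Icc (0:ℝ) T, Vec d),
      Continuous (fun t : Icc (0:ℝ) T =>
        k ((Q (t:ℝ))ᵀ) (k ((P T)ᵀ) ζ + ∫ s in (t:ℝ)..T, G y s)) := by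
    intro y
    apply Continuous.clm_apply
      ((hk_cont.comp hQ_cont.matrix_transpose).comp continuous_subtype_val)
    apply continuous_const.add
    have h1 : Continuous fun b : ℝ => ∫ s in T..b, G y s :=
      intervalIntegral.continuous_primitive (hG_int y) T
    have h2 : Continuous fun b : ℝ => ∫ s in b..T, G y s := by
      have : (fun b : ℝ => ∫ s in b..T, G y s) = fun b => -∫ s in T..b, G y s := by
        funext b; rw [intervalIntegral.integral_symm]
      rw [this]; exact h1.neg
    exact h2.comp continuous_subtype_val
  set Φ : C(Icc (0:ℝ) T, Vec d) → C(Icc (0:ℝ) T, Vec d) :=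
    fun y => ⟨fun t => k ((Q (t:ℝ))ᵀ) (k ((P T)ᵀ) ζ + ∫ s in (t:ℝ)..T, G y s), hΦ_cont y⟩
    with hΦ_def
  -- key rewriting lemma: the original RHS equals Φ, for any w agreeing with ext y on [0,T]
  have hkey : ∀ (y : C(Icc (0:ℝ) T, Vec d)) (w : ℝ → Vec d),
      (∀ s ∈ Icc (0:ℝ) T, w s = ext y s) →
      ∀ t (ht : t ∈ Icc (0:ℝ) T),
      (K T t)ᵀ *ᵥ ζ + (∫ s in t..T, (K s t)ᵀ *ᵥ (g s + (A s)ᵀ *ᵥ w s))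
        = Φ y ⟨t, ht⟩ := by
    intro y w hw t ht
    have hsub : Icc t T ⊆ Icc (0:ℝ) T := Icc_subset_Icc ht.1 le_rfl
    have hint : (∫ s in t..T, (K s t)ᵀ *ᵥ (g s + (A s)ᵀ *ᵥ w s))
        = ∫ s in t..T, k ((Q t)ᵀ) (G y s) := by
      apply intervalIntegral.integral_congr
      intro s hs
      rw [uIcc_of_le ht.2] at hs
      have hs' : s ∈ Icc (0:ℝ) T := hsub hs
      show (K s t)ᵀ *ᵥ (g s + (A s)ᵀ *ᵥ w s) = k ((Q t)ᵀ) (G y s)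
      rw [hKfact s hs' t ht, Matrix.transpose_mul, hk_apply]
      simp only [hG_def, hk_apply]
      rw [hw s hs', ← Matrix.mulVec_mulVec]
      have e1 : ge s = g s := by show g (pr s) = g s; rw [hpr_id s hs']
      have e2 : Ae s = A s := by show A (pr s) = A s; rw [hpr_id s hs']
      rw [e1, e2]
    rw [hint, (k ((Q t)ᵀ)).intervalIntegral_comp_comm (hG_int y t T)]
    simp only [hΦ_def, ContinuousMap.coe_mk]
    rw [map_add (k ((Q t)ᵀ))]
    congr 1
    rw [hk_apply, hk_apply, hKfact T hTm t ht, Matrix.transpose_mul,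
      ← Matrix.mulVec_mulVec]
  -- Lipschitz-type pointwise estimate
  obtain ⟨C₁, hC₁⟩ : ∃ C₁, ∀ x ∈ Icc (0:ℝ) T, ‖k ((Q x)ᵀ)‖ ≤ C₁ :=
    isCompact_Icc.exists_bound_of_continuousOn
      ((hk_cont.comp hQ_cont.matrix_transpose).continuousOn)
  obtain ⟨C₂, hC₂⟩ : ∃ C₂, ∀ x ∈ Icc (0:ℝ) T, ‖k ((P x)ᵀ * (Ae x)ᵀ)‖ ≤ C₂ :=
    isCompact_Icc.exists_bound_of_continuousOn
      ((hk_cont.comp (hP_cont.matrix_transpose.matrix_mul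
        hAe_cont.matrix_transpose)).continuousOn)
  have hC₁0 : 0 ≤ C₁ := le_trans (norm_nonneg _) (hC₁ 0 h0)
  have hC₂0 : 0 ≤ C₂ := le_trans (norm_nonneg _) (hC₂ 0 h0)
  set L : ℝ := C₁ * C₂ with hL_def
  have hL0 : 0 ≤ L := mul_nonneg hC₁0 hC₂0
  -- note all our extended functions factor through pr, giving global bounds
  have hC₁' : ∀ x : ℝ, ‖k ((Q x)ᵀ)‖ ≤ C₁ := by
    intro x
    have : Q x = Q (pr x) := by rw [hQ_def]; simp [hpr_id (pr x) (hpr_mem x)]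
    rw [this]; exact hC₁ (pr x) (hpr_mem x)
  have hC₂' : ∀ x : ℝ, ‖k ((P x)ᵀ * (Ae x)ᵀ)‖ ≤ C₂ := by
    intro x
    have h1 : Q (pr x) = Q x := by rw [hQ_def]; simp [hpr_id (pr x) (hpr_mem x)]
    have h2 : P (pr x) = P x := by rw [hP_def]; simp [hpr_id (pr x) (hpr_mem x)]
    have h3 : Ae (pr x) = Ae x := by rw [hAe_def]; simp [hpr_id (pr x) (hpr_mem x)]
    have := hC₂ (pr x) (hpr_mem x)
    rwa [h2, h3] at this
  have hdist : ∀ (y z : C(Icc (0:ℝ) T, Vec d)) (t : ℝ) (ht : t ∈ Icc (0:ℝ) T),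
      dist (Φ y ⟨t, ht⟩) (Φ z ⟨t, ht⟩)
        ≤ L * ∫ s in t..T, dist (ext y s) (ext z s) := by
    intro y z t ht
    have hdiff : Φ y ⟨t, ht⟩ - Φ z ⟨t, ht⟩
        = k ((Q t)ᵀ) (∫ s in t..T, (G y s - G z s)) := by
      simp only [hΦ_def, ContinuousMap.coe_mk]
      rw [← map_sub, add_sub_add_left_eq_sub,
        ← intervalIntegral.integral_sub (hG_int y t T) (hG_int z t T)]
    rw [dist_eq_norm, hdiff]
    calc ‖k ((Q t)ᵀ) (∫ s in t..T, (G y s - G z s))‖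
        ≤ C₁ * ‖∫ s in t..T, (G y s - G z s)‖ := by
          apply le_trans ((k ((Q t)ᵀ)).le_opNorm _)
          exact mul_le_mul_of_nonneg_right (hC₁' t) (norm_nonneg _)
      _ ≤ C₁ * ∫ s in t..T, ‖G y s - G z s‖ := by
          apply mul_le_mul_of_nonneg_left _ hC₁0
          exact intervalIntegral.norm_integral_le_integral_norm ht.2
      _ ≤ C₁ * ∫ s in t..T, C₂ * dist (ext y s) (ext z s) := by
          apply mul_le_mul_of_nonneg_left _ hC₁0
          apply intervalIntegral.integral_mono_on ht.2
          · exact (((hG_cont y).sub (hG_cont z)).norm).intervalIntegrable t T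
          · exact (continuous_const.mul
              (((hext_cont y).sub (hext_cont z)).norm.congr
                (fun s => (dist_eq_norm _ _).symm))).intervalIntegrable t T
          · intro s _
            have : G y s - G z s = k ((P s)ᵀ * (Ae s)ᵀ) (ext y s - ext z s) := by
              simp only [hG_def, hk_apply, ← Matrix.mulVec_mulVec]
              rw [← Matrix.mulVec_sub, add_sub_add_left_eq_sub, ← Matrix.mulVec_sub]
            rw [this, dist_eq_norm]
            apply le_trans ((k _).le_opNorm _)
            exact mul_le_mul_of_nonneg_right (hC₂' s) (norm_nonneg _)
      _ = L * ∫ s in t..T, dist (ext y s) (ext z s) := by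
          rw [intervalIntegral.integral_const_mul, hL_def]; ring
  -- iterate estimate
  have hiter : ∀ (n : ℕ) (y z : C(Icc (0:ℝ) T, Vec d)) (t : ℝ) (ht : t ∈ Icc (0:ℝ) T),
      dist ((Φ^[n]) y ⟨t, ht⟩) ((Φ^[n]) z ⟨t, ht⟩)
        ≤ L ^ n * (T - t) ^ n / (n.factorial : ℝ) * dist y z := by
    intro n
    induction n with
    | zero =>
      intro y z t ht
      simp only [Function.iterate_zero, id_eq, pow_zero, Nat.factorial_zero, Nat.cast_one,
        mul_one, one_mul, div_one]
      exact ContinuousMap.dist_apply_le_dist _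
    | succ n ih =>
      intro y z t ht
      rw [Function.iterate_succ_apply', Function.iterate_succ_apply']
      calc dist (Φ ((Φ^[n]) y) ⟨t, ht⟩) (Φ ((Φ^[n]) z) ⟨t, ht⟩)
          ≤ L * ∫ s in t..T, dist (ext ((Φ^[n]) y) s) (ext ((Φ^[n]) z) s) :=
            hdist _ _ t ht
        _ ≤ L * ∫ s in t..T,
              L ^ n * (T - s) ^ n / (n.factorial : ℝ) * dist y z := by
            apply mul_le_mul_of_nonneg_left _ hL0
            apply intervalIntegral.integral_mono_on ht.2
            · exact ((((hext_cont _).sub (hext_cont _)).norm.congr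
                (fun s => (dist_eq_norm _ _).symm))).intervalIntegrable t T
            · exact (((continuous_const.mul
                ((continuous_const.sub continuous_id).pow n)).div_const
                  _).mul continuous_const).intervalIntegrable t T
            · intro s hs
              have hs' : s ∈ Icc (0:ℝ) T := ⟨le_trans ht.1 hs.1, hs.2⟩
              rw [hext_eq _ s hs', hext_eq _ s hs']
              exact ih y z s hs'
        _ = L ^ (n+1) * (T - t) ^ (n+1) / ((n+1).factorial : ℝ) * dist y z := by
            have : (∫ s in t..T, L ^ n * (T - s) ^ n / (n.factorial : ℝ) * dist y z)
                = (L ^ n / (n.factorial : ℝ) * dist y z) * ∫ s in t..T, (T - s) ^ n := by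
              rw [← intervalIntegral.integral_const_mul]
              apply intervalIntegral.integral_congr
              intro s _; ring
            rw [this]
            have hint : (∫ s in t..T, (T - s) ^ n) = (T - t) ^ (n+1) / (n + 1 : ℝ) := by
              rw [intervalIntegral.integral_comp_sub_left (fun u => u ^ n) T]
              rw [sub_self, integral_pow]
              simp
            rw [hint, Nat.factorial_succ]
            push_cast
            have hn : ((n.factorial : ℝ)) ≠ 0 := Nat.cast_ne_zero.2 n.factorial_ne_zero
            have hn1 : ((n:ℝ) + 1) ≠ 0 := by positivity
            field_simp
            ring
  -- dist bound on the whole space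
  have hiter' : ∀ (n : ℕ) (y z : C(Icc (0:ℝ) T, Vec d)),
      dist ((Φ^[n]) y) ((Φ^[n]) z) ≤ (L * T) ^ n / (n.factorial : ℝ) * dist y z := by
    intro n y z
    have hnn : 0 ≤ (L * T) ^ n / (n.factorial : ℝ) * dist y z := by positivity
    rw [ContinuousMap.dist_le hnn]
    intro x
    refine (hiter n y z x x.2).trans ?_
    have hx1 : (0:ℝ) ≤ (x:ℝ) := x.2.1
    have hx2 : ((x:ℝ)) ≤ T := x.2.2
    have h1 : L ^ n * ((T:ℝ) - (x:ℝ)) ^ n ≤ (L * T) ^ n := by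
      rw [mul_pow L T n]
      have h3 : ((T:ℝ) - (x:ℝ)) ^ n ≤ T ^ n :=
        pow_le_pow_left₀ (by linarith) (by linarith) n
      exact mul_le_mul_of_nonneg_left h3 (pow_nonneg hL0 n)
    have h2 : (0:ℝ) < (n.factorial : ℝ) := by positivity
    exact mul_le_mul_of_nonneg_right ((div_le_div_iff_of_pos_right h2).2 h1) dist_nonneg
  -- choose n making the iterate a contraction
  obtain ⟨n, hn⟩ : ∃ n : ℕ, (L * T) ^ n / (n.factorial : ℝ) < 1 := by
    have := FloorSemiring.tendsto_pow_div_factorial_atTop (L * T)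
    have h1 := this.eventually (gt_mem_nhds one_pos)
    obtain ⟨n, hn⟩ := h1.exists
    exact ⟨n, hn⟩
  have hnn : 0 ≤ (L * T) ^ n / (n.factorial : ℝ) := by positivity
  set Kc : NNReal := ⟨(L * T) ^ n / (n.factorial : ℝ), hnn⟩ with hKc_def
  have hcontr : ContractingWith Kc (Φ^[n]) := by
    constructor
    · exact_mod_cast hn
    · apply LipschitzWith.of_dist_le_mul
      intro y z
      exact_mod_cast hiter' n y z
  obtain ⟨x, hx_fix, hx_uniq⟩ := exists_fixedPt_of_iterate hcontr
  -- the solution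
  refine ⟨ext x, ⟨(hext_cont x).continuousOn, ?_⟩, ?_⟩
  · intro t ht
    rw [hext_eq x t ht]
    conv_lhs => rw [← hx_fix]
    exact (hkey x (ext x) (fun _ _ => rfl) t ht).symm
  · rintro z ⟨hz_cont, hz_eq⟩ t ht
    set zr : C(Icc (0:ℝ) T, Vec d) := ⟨fun s => z s, by
      have : Continuous ((Icc (0:ℝ) T).restrict z) := hz_cont.restrict
      exact this⟩ with hzr_def
    have hzr_fix : Function.IsFixedPt Φ zr := by
      apply ContinuousMap.ext
      intro s
      have hs := s.2
      have : Φ zr ⟨(s:ℝ), hs⟩ = z s := by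
        rw [← hkey zr z (fun u hu => (hext_eq zr u hu).symm) s hs]
        exact (hz_eq s hs).symm
      exact this
    have := hx_uniq zr hzr_fix
    have hz : z t = zr ⟨t, ht⟩ := rfl
    rw [hz, this, hext_eq x t ht]
end
end

section
/- Let K be a flow kernel, let the LQ coefficients, ξ ∈ ℝ^d and m, M ∈ C([0,T]; ℝ^d) be given, and let J be the cost functional. Then for every α, h ∈ L²([0,T]; ℝ^κ) the limit lim_{ε→0} (J(α + εh) − J(α))/ε exists and equals ∫₀ᵀ (D^h_t)ᵀ((Q_t + Q̄_t) X^α_t − Q̄_t S_t m_t) dt + (D^h_T)ᵀ((Q + Q̄) X^α_T − Q̄ S m_T) + ∫₀ᵀ α_tᵀ R_t h_t dt, where D^h is the unique continuous solution of D_t = ∫₀ᵗ K(t,s)(A_s D_s + B_s h_s) ds. In particular J is Gâteaux differentiable on L²([0,T]; ℝ^κ). -/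
open MeasureTheory Matrix Set Filter

noncomputable section

/-- `X` is a continuous solution on `[0,T]` of the controlled forward Volterra state equation
`X t = K t 0 ξ + M t + ∫₀ᵗ K t s (A s X s + B s α s + C s m s) ds`. -/
def SolvesState (T : ℝ) {d κ : ℕ} (K : ℝ → ℝ → Mat d) (A C : ℝ → Mat d)
    (B : ℝ → Matrix (Fin d) (Fin κ) ℝ) (ξ : Vec d) (m M : ℝ → Vec d)
    (α : ℝ → Vec κ) (X : ℝ → Vec d) : Prop :=
  ContinuousOn X (Icc (0:ℝ) T) ∧
  ∀ t ∈ Icc (0:ℝ) T,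
    X t = K t 0 *ᵥ ξ + M t
      + ∫ s in (0:ℝ)..t, K t s *ᵥ (A s *ᵥ X s + B s *ᵥ α s + C s *ᵥ m s)

/-- `D` is a continuous solution on `[0,T]` of `D t = ∫₀ᵗ K t s (A s D s + B s h s) ds`. -/
def SolvesVar (T : ℝ) {d κ : ℕ} (K : ℝ → ℝ → Mat d) (A : ℝ → Mat d)
    (B : ℝ → Matrix (Fin d) (Fin κ) ℝ) (h : ℝ → Vec κ) (D : ℝ → Vec d) : Prop :=
  ContinuousOn D (Icc (0:ℝ) T) ∧
  ∀ t ∈ Icc (0:ℝ) T,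
    D t = ∫ s in (0:ℝ)..t, K t s *ᵥ (A s *ᵥ D s + B s *ᵥ h s)

/-- The linear-quadratic cost functional `J`, as a function of the control `α` and the
associated state path `X`. -/
def cost (T : ℝ) {d κ : ℕ} (R : ℝ → Matrix (Fin κ) (Fin κ) ℝ) (Qt Qbt St : ℝ → Mat d)
    (Q Qb S : Mat d) (m : ℝ → Vec d) (α : ℝ → Vec κ) (X : ℝ → Vec d) : ℝ :=
  (∫ t in (0:ℝ)..T, (1/2 : ℝ) *
      (X t ⬝ᵥ (Qt t *ᵥ X t) + α t ⬝ᵥ (R t *ᵥ α t)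
        + (X t - St t *ᵥ m t) ⬝ᵥ (Qbt t *ᵥ (X t - St t *ᵥ m t))))
  + (1/2 : ℝ) *
      (X T ⬝ᵥ (Q *ᵥ X T) + (X T - S *ᵥ m T) ⬝ᵥ (Qb *ᵥ (X T - S *ᵥ m T)))

lemma exists_entry_bound {n p : ℕ} {f : ℝ → Matrix (Fin n) (Fin p) ℝ} {s : Set ℝ}
    (hs : IsCompact s) (hf : ContinuousOn f s) :
    ∃ c : ℝ, 0 ≤ c ∧ ∀ t ∈ s, ∀ i j, |f t i j| ≤ c := by
  let g : ℝ → (Fin n → Fin p → ℝ) := fun t => f t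
  have hg : ContinuousOn g s := hf
  obtain ⟨c, hc⟩ := hs.exists_bound_of_continuousOn hg
  refine ⟨max c 0, le_max_right _ _, fun t ht i j => ?_⟩
  calc |f t i j| = ‖g t i j‖ := rfl
    _ ≤ ‖g t i‖ := norm_le_pi_norm _ j
    _ ≤ ‖g t‖ := norm_le_pi_norm _ i
    _ ≤ c := hc t ht
    _ ≤ max c 0 := le_max_left _ _

lemma abs_dotProduct_le'' {n : ℕ} (x y : Vec n) {bx by' : ℝ} (hx : ∀ i, |x i| ≤ bx)
    (hy : ∀ i, |y i| ≤ by') (hbx : 0 ≤ bx) : |x ⬝ᵥ y| ≤ n * bx * by' := by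
  have : |x ⬝ᵥ y| ≤ ∑ i : Fin n, bx * by' := by
    refine (Finset.abs_sum_le_sum_abs _ _).trans (Finset.sum_le_sum fun i _ => ?_)
    rw [abs_mul]
    exact mul_le_mul (hx i) (hy i) (abs_nonneg _) hbx
  simpa [Finset.sum_const, Finset.card_univ, mul_assoc] using this

lemma norm_mulVec_le' {n p : ℕ} {M : Matrix (Fin n) (Fin p) ℝ} {v : Vec p} {c : ℝ}
    (hM : ∀ i j, |M i j| ≤ c) (hc : 0 ≤ c) : ‖M *ᵥ v‖ ≤ p * c * ‖v‖ := by
  have h0 : (0:ℝ) ≤ p * c * ‖v‖ := by positivity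
  refine (pi_norm_le_iff_of_nonneg h0).2 fun i => ?_
  exact abs_dotProduct_le'' (fun j => M i j) v (fun j => hM i j)
    (fun j => norm_le_pi_norm v j) hc

lemma abs_dotProduct_le' {n : ℕ} (x y : Vec n) : |x ⬝ᵥ y| ≤ n * ‖x‖ * ‖y‖ :=
  abs_dotProduct_le'' x y (fun i => norm_le_pi_norm x i) (fun i => norm_le_pi_norm y i)
    (norm_nonneg _)

lemma dot_symm {n : ℕ} {M : Mat n} (hM : Mᵀ = M) (x y : Vec n) :
    x ⬝ᵥ (M *ᵥ y) = y ⬝ᵥ (M *ᵥ x) := by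
  rw [Matrix.dotProduct_mulVec, ← Matrix.mulVec_transpose, hM, dotProduct_comm]

lemma quad_expand {n : ℕ} {M : Mat n} (hM : Mᵀ = M) (x z : Vec n) :
    (x + z) ⬝ᵥ (M *ᵥ (x + z)) =
      x ⬝ᵥ (M *ᵥ x) + 2 * (z ⬝ᵥ (M *ᵥ x)) + z ⬝ᵥ (M *ᵥ z) := by
  rw [Matrix.mulVec_add, add_dotProduct, dotProduct_add,
    dotProduct_add, dot_symm hM x z]
  ring

lemma quad_expand' {n : ℕ} {M : Mat n} (hM : Mᵀ = M) (x z : Vec n) (ε : ℝ) :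
    (x + ε • z) ⬝ᵥ (M *ᵥ (x + ε • z)) =
      x ⬝ᵥ (M *ᵥ x) + ε * (2 * (z ⬝ᵥ (M *ᵥ x))) + ε ^ 2 * (z ⬝ᵥ (M *ᵥ z)) := by
  rw [quad_expand hM]
  simp only [smul_dotProduct, dotProduct_smul, Matrix.mulVec_smul,
    smul_eq_mul]
  ring

/-- Volterra-Gronwall lemma: a nonneg continuous function with `f t ≤ C ∫₀ᵗ f` vanishes. -/
lemma volterra_zero {T C : ℝ} (hC : 0 ≤ C) {f : ℝ → ℝ}
    (hf : ContinuousOn f (Icc 0 T)) (hpos : ∀ t ∈ Icc (0:ℝ) T, 0 ≤ f t)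
    (hineq : ∀ t ∈ Icc (0:ℝ) T, f t ≤ C * ∫ s in (0:ℝ)..t, f s) :
    ∀ t ∈ Icc (0:ℝ) T, f t = 0 := by
  obtain ⟨Mz, hMz0, hMz⟩ : ∃ c : ℝ, 0 ≤ c ∧ ∀ t ∈ Icc (0:ℝ) T, |f t| ≤ c := by
    obtain ⟨c, hc⟩ := (isCompact_Icc).exists_bound_of_continuousOn hf
    exact ⟨max c 0, le_max_right _ _, fun t ht => (hc t ht).trans (le_max_left _ _)⟩
  have key : ∀ n : ℕ, ∀ t ∈ Icc (0:ℝ) T, f t ≤ Mz * (C * t) ^ n / n.factorial := by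
    intro n
    induction n with
    | zero => intro t ht; simpa using (abs_le.1 (hMz t ht)).2
    | succ n ih =>
      intro t ht
      obtain ⟨ht0, htT⟩ := ht
      have hint1 : IntervalIntegrable f volume 0 t := by
        apply ContinuousOn.intervalIntegrable
        rw [uIcc_of_le ht0]
        exact hf.mono (Icc_subset_Icc le_rfl htT)
      have hint2 : IntervalIntegrable (fun s => Mz * (C * s) ^ n / n.factorial) volume 0 t :=
        (Continuous.intervalIntegrable (by continuity) _ _)
      have hmono : (∫ s in (0:ℝ)..t, f s) ≤ ∫ s in (0:ℝ)..t, Mz * (C * s) ^ n / n.factorial := by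
        apply intervalIntegral.integral_mono_on ht0 hint1 hint2
        intro s hs
        exact ih s ⟨hs.1, hs.2.trans htT⟩
      have hcomp : (∫ s in (0:ℝ)..t, Mz * (C * s) ^ n / n.factorial)
          = Mz * C ^ n / n.factorial * (t ^ (n+1) / (n+1)) := by
        have he : ∀ s : ℝ, Mz * (C * s) ^ n / n.factorial
            = Mz * C ^ n / n.factorial * s ^ n := by
          intro s; rw [mul_pow]; ring
        simp_rw [he]
        rw [intervalIntegral.integral_const_mul, integral_pow]
        simp
      calc f t ≤ C * ∫ s in (0:ℝ)..t, f s := hineq t ⟨ht0, htT⟩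
        _ ≤ C * (Mz * C ^ n / n.factorial * (t ^ (n+1) / (n+1))) := by
            rw [hcomp] at hmono; exact mul_le_mul_of_nonneg_left hmono hC
        _ = Mz * (C * t) ^ (n+1) / (n+1).factorial := by
            rw [mul_pow, Nat.factorial_succ]
            push_cast
            have h1 : (n.factorial : ℝ) ≠ 0 := Nat.cast_ne_zero.2 n.factorial_ne_zero
            have h2 : (n:ℝ) + 1 ≠ 0 := by positivity
            field_simp
            ring
  intro t ht
  refine le_antisymm ?_ (hpos t ht)
  have htend : Tendsto (fun n : ℕ => Mz * (C * t) ^ n / n.factorial) atTop (nhds 0) := by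
    have h1 := FloorSemiring.tendsto_pow_div_factorial_atTop (K := ℝ) (C * t)
    have h2 := h1.const_mul Mz
    simpa [mul_div_assoc] using h2
  exact ge_of_tendsto' htend fun n => key n t ht

lemma kernel_cont_zero {T : ℝ} {d : ℕ} {K : ℝ → ℝ → Mat d} (hK : IsFlowKernel T d K)
    (hT : 0 ≤ T) : ContinuousOn (fun s => K 0 s) (Icc (0:ℝ) T) := by
  have h0 : (0:ℝ) ∈ Icc (0:ℝ) T := ⟨le_rfl, hT⟩
  have hleft : ∀ s ∈ Icc (0:ℝ) T, K 0 s * K s 0 = 1 := by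
    intro s hs
    have h1 := hK.flow 0 h0 s hs 0 h0
    rw [hK.diag 0 h0] at h1
    exact h1.symm
  have hdet : ∀ s ∈ Icc (0:ℝ) T, (K s 0).det ≠ 0 := by
    intro s hs h
    have h2 := congrArg Matrix.det (hleft s hs)
    rw [Matrix.det_mul, h, mul_zero, Matrix.det_one] at h2
    exact zero_ne_one h2
  have heq : ∀ s ∈ Icc (0:ℝ) T, K 0 s = ((K s 0).det)⁻¹ • (K s 0).adjugate := by
    intro s hs
    have h1 : (K s 0)⁻¹ = K 0 s := Matrix.inv_eq_left_inv (hleft s hs)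
    rw [← h1, Matrix.inv_def, Ring.inverse_eq_inv']
  have hdetc : ContinuousOn (fun s => (K s 0).det) (Icc (0:ℝ) T) :=
    (continuous_id.matrix_det).comp_continuousOn hK.cont
  have hadjc : ContinuousOn (fun s => (K s 0).adjugate) (Icc (0:ℝ) T) :=
    (continuous_id.matrix_adjugate).comp_continuousOn hK.cont
  exact ContinuousOn.congr ((hdetc.inv₀ hdet).smul hadjc) heq

lemma kernel_split {T : ℝ} {d : ℕ} {K : ℝ → ℝ → Mat d} (hK : IsFlowKernel T d K)
    (hT : 0 ≤ T) : ∀ t ∈ Icc (0:ℝ) T, ∀ s ∈ Icc (0:ℝ) T, K t s = K t 0 * K 0 s :=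
  fun t ht s hs => hK.flow s hs 0 ⟨le_rfl, hT⟩ t ht

lemma kernel_cont_right {T : ℝ} {d : ℕ} {K : ℝ → ℝ → Mat d} (hK : IsFlowKernel T d K)
    (hT : 0 ≤ T) {t : ℝ} (ht : t ∈ Icc (0:ℝ) T) :
    ContinuousOn (fun s => K t s) (Icc (0:ℝ) T) := by
  refine ContinuousOn.congr ?_ (fun s hs => kernel_split hK hT t ht s hs)
  exact (continuous_const.matrix_mul continuous_id).comp_continuousOn (kernel_cont_zero hK hT)

lemma kernel_entry_bound {T : ℝ} {d : ℕ} {K : ℝ → ℝ → Mat d} (hK : IsFlowKernel T d K)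
    (hT : 0 ≤ T) : ∃ c : ℝ, 0 ≤ c ∧
      ∀ t ∈ Icc (0:ℝ) T, ∀ s ∈ Icc (0:ℝ) T, ∀ i j, |K t s i j| ≤ c := by
  obtain ⟨c1, hc10, hc1⟩ := exists_entry_bound isCompact_Icc hK.cont
  obtain ⟨c2, hc20, hc2⟩ := exists_entry_bound isCompact_Icc (kernel_cont_zero hK hT)
  refine ⟨d * c1 * c2, by positivity, fun t ht s hs i j => ?_⟩
  rw [kernel_split hK hT t ht s hs]
  rw [Matrix.mul_apply]
  have h1 : |(fun l => K t 0 i l) ⬝ᵥ (fun l => K 0 s l j)| ≤ d * c1 * c2 :=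
    abs_dotProduct_le'' _ _ (fun l => hc1 t ht i l) (fun l => hc2 s hs l j) hc10
  simpa [dotProduct] using h1

lemma contOn_mulVec {n p : ℕ} {G : ℝ → Matrix (Fin n) (Fin p) ℝ} {v : ℝ → Vec p} {s : Set ℝ}
    (hG : ContinuousOn G s) (hv : ContinuousOn v s) :
    ContinuousOn (fun x => G x *ᵥ v x) s := by
  have h1 : ContinuousOn (fun x => (G x : Fin n → Fin p → ℝ)) s := hG
  apply continuousOn_pi.2
  intro i
  have he : (fun x => (G x *ᵥ v x) i) = fun x => ∑ j : Fin p, G x i j * v x j := by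
    funext x; simp [Matrix.mulVec, dotProduct]
  rw [he]
  apply continuousOn_finset_sum
  intro j _
  exact (((continuous_apply j).comp (continuous_apply i)).comp_continuousOn h1).mul
    ((continuous_apply j).comp_continuousOn hv)

lemma contOn_dot {n : ℕ} {u v : ℝ → Vec n} {s : Set ℝ}
    (hu : ContinuousOn u s) (hv : ContinuousOn v s) :
    ContinuousOn (fun x => u x ⬝ᵥ v x) s := by
  have he : (fun x => u x ⬝ᵥ v x) = fun x => ∑ i : Fin n, u x i * v x i := by
    funext x; simp [dotProduct]
  rw [he]
  apply continuousOn_finset_sum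
  intro i _
  exact ((continuous_apply i).comp_continuousOn hu).mul ((continuous_apply i).comp_continuousOn hv)

lemma aemeasurable_pi' {n : ℕ} {f : ℝ → Fin n → ℝ} {μ : Measure ℝ}
    (h : ∀ i, AEMeasurable (fun x => f x i) μ) : AEMeasurable f μ := by
  choose g hg hfg using h
  exact ⟨fun x i => g i x, measurable_pi_iff.2 hg,
    (ae_all_iff.2 hfg).mono fun x hx => funext hx⟩

lemma aem_mulVec {n p : ℕ} {μ : Measure ℝ} {G : ℝ → Matrix (Fin n) (Fin p) ℝ}
    (hG : ∀ i j, AEMeasurable (fun x => G x i j) μ) {v : ℝ → Vec p}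
    (hv : AEMeasurable v μ) : AEMeasurable (fun x => G x *ᵥ v x) μ := by
  apply aemeasurable_pi'
  intro i
  have he : (fun x => (G x *ᵥ v x) i) = fun x => ∑ j : Fin p, G x i j * v x j := by
    funext x; simp [Matrix.mulVec, dotProduct]
  rw [he]
  exact Finset.aemeasurable_fun_sum _ fun j _ =>
    (hG i j).mul ((measurable_pi_apply j).comp_aemeasurable hv)

lemma aem_dot {n : ℕ} {μ : Measure ℝ} {u v : ℝ → Vec n}
    (hu : AEMeasurable u μ) (hv : AEMeasurable v μ) :
    AEMeasurable (fun x => u x ⬝ᵥ v x) μ := by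
  have he : (fun x => u x ⬝ᵥ v x) = fun x => ∑ i : Fin n, u x i * v x i := by
    funext x; simp [dotProduct]
  rw [he]
  exact Finset.aemeasurable_fun_sum _ fun i _ =>
    ((measurable_pi_apply i).comp_aemeasurable hu).mul ((measurable_pi_apply i).comp_aemeasurable hv)

lemma entry_aemeasurable {n p : ℕ} {f : ℝ → Matrix (Fin n) (Fin p) ℝ} {s u : Set ℝ}
    (hf : ContinuousOn f s) (hu : MeasurableSet u) (hsub : u ⊆ s) (i : Fin n) (j : Fin p) :
    AEMeasurable (fun x => f x i j) (volume.restrict u) := by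
  have h1 : ContinuousOn (fun x => (f x : Fin n → Fin p → ℝ)) s := hf
  have hg : ContinuousOn (fun x => f x i j) s := by
    exact
      ((continuous_apply j).comp (continuous_apply i)).comp_continuousOn h1
  exact (hg.mono hsub).aemeasurable hu

lemma L2_integrableOn {T : ℝ} {n : ℕ} {u : ℝ → Vec n}
    (hu : MemLp u 2 (volume.restrict (Icc (0:ℝ) T))) :
    IntegrableOn u (Icc (0:ℝ) T) volume := by
  haveI : IsFiniteMeasure (volume.restrict (Icc (0:ℝ) T)) :=
    ⟨by rw [Measure.restrict_apply_univ]; exact measure_Icc_lt_top⟩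
  exact memLp_one_iff_integrable.1 (hu.mono_exponent (by norm_num))

lemma psd_transpose {n : ℕ} {M : Matrix (Fin n) (Fin n) ℝ} (h : M.PosSemidef) : Mᵀ = M := by
  have h2 : Mᴴ = M := h.1
  ext i j
  have h3 := congrFun (congrFun h2 i) j
  simpa [Matrix.conjTranspose_apply] using h3

lemma integrable_quad {T : ℝ} (hT : 0 ≤ T) {n : ℕ} {R : ℝ → Matrix (Fin n) (Fin n) ℝ}
    (hR : ContinuousOn R (Icc (0:ℝ) T)) {u v : ℝ → Vec n}
    (hu : MemLp u 2 (volume.restrict (Icc (0:ℝ) T)))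
    (hv : MemLp v 2 (volume.restrict (Icc (0:ℝ) T))) :
    IntervalIntegrable (fun t => u t ⬝ᵥ (R t *ᵥ v t)) volume 0 T := by
  obtain ⟨cR, hcR0, hcR⟩ := exists_entry_bound isCompact_Icc hR
  have hsub : Ioc (0:ℝ) T ⊆ Icc (0:ℝ) T := Ioc_subset_Icc_self
  have hmeas : ∀ {w : ℝ → Vec n}, MemLp w 2 (volume.restrict (Icc (0:ℝ) T)) →
      AEMeasurable w (volume.restrict (Ioc (0:ℝ) T)) := fun hw =>
    hw.aestronglyMeasurable.aemeasurable.mono_measure (Measure.restrict_mono hsub le_rfl)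
  rw [intervalIntegrable_iff_integrableOn_Ioc_of_le hT]
  have hsq : Integrable (fun t => ‖u t‖ ^ 2 + ‖v t‖ ^ 2) (volume.restrict (Ioc (0:ℝ) T)) := by
    have h1 : Integrable (fun t => ‖u t‖ ^ 2) (volume.restrict (Icc (0:ℝ) T)) :=
      hu.norm.integrable_sq
    have h2 : Integrable (fun t => ‖v t‖ ^ 2) (volume.restrict (Icc (0:ℝ) T)) :=
      hv.norm.integrable_sq
    exact ((h1.mono_measure (Measure.restrict_mono hsub le_rfl)).add
      (h2.mono_measure (Measure.restrict_mono hsub le_rfl)))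
  apply Integrable.mono' (hsq.const_mul ((n:ℝ) * (n * cR)))
  · exact (aem_dot (hmeas hu)
      (aem_mulVec (fun i j => entry_aemeasurable hR measurableSet_Ioc hsub i j)
        (hmeas hv))).aestronglyMeasurable
  · rw [ae_restrict_iff' measurableSet_Ioc]
    refine ae_of_all _ fun t ht => ?_
    have h1 : |u t ⬝ᵥ (R t *ᵥ v t)| ≤ n * ‖u t‖ * ‖R t *ᵥ v t‖ := abs_dotProduct_le' _ _
    have h2 : ‖R t *ᵥ v t‖ ≤ n * cR * ‖v t‖ :=
      norm_mulVec_le' (fun i j => hcR t (hsub ht) i j) hcR0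
    have h3 : ‖u t ⬝ᵥ (R t *ᵥ v t)‖ ≤ n * ‖u t‖ * (n * cR * ‖v t‖) := by
      refine h1.trans ?_
      exact mul_le_mul_of_nonneg_left h2 (by positivity)
    refine h3.trans ?_
    have h4 : ‖u t‖ * ‖v t‖ ≤ ‖u t‖ ^ 2 + ‖v t‖ ^ 2 := by
      nlinarith [sq_nonneg (‖u t‖ - ‖v t‖), norm_nonneg (u t), norm_nonneg (v t)]
    calc (n:ℝ) * ‖u t‖ * (n * cR * ‖v t‖) = (n * (n * cR)) * (‖u t‖ * ‖v t‖) := by ring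
      _ ≤ (n * (n * cR)) * (‖u t‖ ^ 2 + ‖v t‖ ^ 2) := by
          exact mul_le_mul_of_nonneg_left h4 (by positivity)

/-- The controlled state depends affinely on the control: `Xe ε = Xe 0 + ε • D`. -/
lemma state_linear
    (T : ℝ) (hT : 0 < T) {d κ : ℕ}
    {K : ℝ → ℝ → Mat d} (hK : IsFlowKernel T d K)
    {A C : ℝ → Mat d} {B : ℝ → Matrix (Fin d) (Fin κ) ℝ}
    (hA : ContinuousOn A (Icc (0:ℝ) T)) (hC : ContinuousOn C (Icc (0:ℝ) T))
    (hB : ContinuousOn B (Icc (0:ℝ) T))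
    {ξ : Vec d} {m M : ℝ → Vec d} (hm : ContinuousOn m (Icc (0:ℝ) T))
    {α h : ℝ → Vec κ}
    (hα : MemLp α 2 (volume.restrict (Icc (0:ℝ) T)))
    (hh : MemLp h 2 (volume.restrict (Icc (0:ℝ) T)))
    {Xe : ℝ → ℝ → Vec d}
    (hXe : ∀ ε : ℝ, SolvesState T K A C B ξ m M (fun t => α t + ε • h t) (Xe ε))
    {D : ℝ → Vec d} (hD : SolvesVar T K A B h D) (ε : ℝ) :
    ∀ t ∈ Icc (0:ℝ) T, Xe ε t = Xe 0 t + ε • D t := by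
  have hT' : 0 ≤ T := hT.le
  obtain ⟨cK, hcK0, hcK⟩ := kernel_entry_bound hK hT'
  obtain ⟨cA, hcA0, hcA⟩ := exists_entry_bound isCompact_Icc hA
  obtain ⟨cB, hcB0, hcB⟩ := exists_entry_bound isCompact_Icc hB
  set Z : ℝ → Vec d := fun u => Xe ε u - Xe 0 u - ε • D u with hZdef
  have hZc : ContinuousOn Z (Icc (0:ℝ) T) :=
    (((hXe ε).1.sub (hXe 0).1).sub ((hD.1).const_smul ε))
  have hαL1 : IntegrableOn α (Icc (0:ℝ) T) volume := L2_integrableOn hα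
  have hhL1 : IntegrableOn h (Icc (0:ℝ) T) volume := L2_integrableOn hh
  -- the fundamental integral equation for Z
  have hZeq : ∀ t ∈ Icc (0:ℝ) T, Z t = ∫ s in (0:ℝ)..t, K t s *ᵥ (A s *ᵥ Z s) := by
    intro t ht
    obtain ⟨ht0, htT⟩ := ht
    have hsubI : Icc (0:ℝ) t ⊆ Icc (0:ℝ) T := Icc_subset_Icc le_rfl htT
    have hsubIoc : Ioc (0:ℝ) t ⊆ Icc (0:ℝ) T := fun s hs => ⟨hs.1.le, hs.2.trans htT⟩
    have Kc : ContinuousOn (fun s => K t s) (Icc (0:ℝ) T) :=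
      kernel_cont_right hK hT' ⟨ht0, htT⟩
    -- integrability of the control contribution
    have hBint : ∀ (u : ℝ → Vec κ), IntegrableOn u (Icc (0:ℝ) T) volume →
        IntegrableOn (fun s => K t s *ᵥ (B s *ᵥ u s)) (Ioc (0:ℝ) t) volume := by
      intro u hu
      have hum : AEMeasurable u (volume.restrict (Ioc (0:ℝ) t)) :=
        hu.aemeasurable.mono_measure (Measure.restrict_mono hsubIoc le_rfl)
      apply Integrable.mono'
        ((hu.norm.mono_measure (Measure.restrict_mono hsubIoc le_rfl)).const_mul ((d:ℝ) * cK * ((κ:ℝ) * cB)))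
      · exact (aem_mulVec
          (fun i j => entry_aemeasurable Kc measurableSet_Ioc hsubIoc i j)
          (aem_mulVec (fun i j => entry_aemeasurable hB measurableSet_Ioc hsubIoc i j)
            hum)).aestronglyMeasurable
      · rw [ae_restrict_iff' measurableSet_Ioc]
        refine ae_of_all _ fun s hs => ?_
        have hsIcc := hsubIoc hs
        have h1 : ‖K t s *ᵥ (B s *ᵥ u s)‖ ≤ d * cK * ‖B s *ᵥ u s‖ :=
          norm_mulVec_le' (fun i j => hcK t ⟨ht0, htT⟩ s hsIcc i j) hcK0
        have h2 : ‖B s *ᵥ u s‖ ≤ κ * cB * ‖u s‖ :=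
          norm_mulVec_le' (fun i j => hcB s hsIcc i j) hcB0
        calc ‖K t s *ᵥ (B s *ᵥ u s)‖ ≤ d * cK * (κ * cB * ‖u s‖) :=
              h1.trans (mul_le_mul_of_nonneg_left h2 (by positivity))
          _ = (d:ℝ) * cK * ((κ:ℝ) * cB) * ‖u s‖ := by ring
    have hBα : IntervalIntegrable (fun s => K t s *ᵥ (B s *ᵥ α s)) volume 0 t :=
      (intervalIntegrable_iff_integrableOn_Ioc_of_le ht0).2 (hBint α hαL1)
    have hBh : IntervalIntegrable (fun s => K t s *ᵥ (B s *ᵥ h s)) volume 0 t :=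
      (intervalIntegrable_iff_integrableOn_Ioc_of_le ht0).2 (hBint h hhL1)
    have hcont0 : ContinuousOn (fun s => K t s *ᵥ (A s *ᵥ Xe 0 s + C s *ᵥ m s))
        (Icc (0:ℝ) T) := contOn_mulVec Kc ((contOn_mulVec hA (hXe 0).1).add (contOn_mulVec hC hm))
    have hcontD : ContinuousOn (fun s => K t s *ᵥ (A s *ᵥ D s)) (Icc (0:ℝ) T) :=
      contOn_mulVec Kc (contOn_mulVec hA hD.1)
    have hii : ∀ {g : ℝ → Vec d}, ContinuousOn g (Icc (0:ℝ) T) →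
        IntervalIntegrable g volume 0 t := by
      intro g hg
      apply ContinuousOn.intervalIntegrable
      rw [uIcc_of_le ht0]
      exact hg.mono hsubI
    have hf0 : IntervalIntegrable
        (fun s => K t s *ᵥ (A s *ᵥ Xe 0 s + B s *ᵥ α s + C s *ᵥ m s)) volume 0 t := by
      have heq : (fun s => K t s *ᵥ (A s *ᵥ Xe 0 s + B s *ᵥ α s + C s *ᵥ m s))
          = fun s => (K t s *ᵥ (A s *ᵥ Xe 0 s + C s *ᵥ m s)) + K t s *ᵥ (B s *ᵥ α s) := by
        funext s
        rw [← Matrix.mulVec_add]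
        congr 1
        abel
      rw [heq]
      exact (hii hcont0).add hBα
    have hfD : IntervalIntegrable (fun s => K t s *ᵥ (A s *ᵥ D s + B s *ᵥ h s)) volume 0 t := by
      have heq : (fun s => K t s *ᵥ (A s *ᵥ D s + B s *ᵥ h s))
          = fun s => (K t s *ᵥ (A s *ᵥ D s)) + K t s *ᵥ (B s *ᵥ h s) := by
        funext s
        rw [← Matrix.mulVec_add]
      rw [heq]
      exact (hii hcontD).add hBh
    have hgc : ContinuousOn (fun s => K t s *ᵥ (A s *ᵥ Z s)) (Icc (0:ℝ) T) :=
      contOn_mulVec Kc (contOn_mulVec hA hZc)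
    have hgint : IntervalIntegrable (fun s => K t s *ᵥ (A s *ᵥ Z s)) volume 0 t := hii hgc
    -- the three integral equations
    have e1 := (hXe ε).2 t ⟨ht0, htT⟩
    have e1' : Xe ε t = K t 0 *ᵥ ξ + M t
        + ∫ s in (0:ℝ)..t, K t s *ᵥ (A s *ᵥ Xe ε s + B s *ᵥ (α s + ε • h s) + C s *ᵥ m s) := e1
    have e0 := (hXe 0).2 t ⟨ht0, htT⟩
    simp only [zero_smul, add_zero] at e0
    have eD := hD.2 t ⟨ht0, htT⟩
    -- pointwise decomposition of the ε-integrand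
    have hsplit : (fun s => K t s *ᵥ (A s *ᵥ Xe ε s + B s *ᵥ (α s + ε • h s) + C s *ᵥ m s))
        = fun s => (K t s *ᵥ (A s *ᵥ Z s))
            + ((K t s *ᵥ (A s *ᵥ Xe 0 s + B s *ᵥ α s + C s *ᵥ m s))
              + ε • (K t s *ᵥ (A s *ᵥ D s + B s *ᵥ h s))) := by
      funext s
      rw [hZdef]
      simp only [← Matrix.mulVec_smul, ← Matrix.mulVec_add]
      congr 1
      simp only [Matrix.mulVec_add, Matrix.mulVec_sub, Matrix.mulVec_smul]
      module
    have hInt : (∫ s in (0:ℝ)..t, K t s *ᵥ (A s *ᵥ Xe ε s + B s *ᵥ (α s + ε • h s) + C s *ᵥ m s))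
        = (∫ s in (0:ℝ)..t, K t s *ᵥ (A s *ᵥ Z s))
          + ((∫ s in (0:ℝ)..t, K t s *ᵥ (A s *ᵥ Xe 0 s + B s *ᵥ α s + C s *ᵥ m s))
            + ε • ∫ s in (0:ℝ)..t, K t s *ᵥ (A s *ᵥ D s + B s *ᵥ h s)) := by
      have hsm : IntervalIntegrable
          (fun s => ε • (K t s *ᵥ (A s *ᵥ D s + B s *ᵥ h s))) volume 0 t := hfD.smul ε
      rw [hsplit, intervalIntegral.integral_add hgint (hf0.add hsm),
        intervalIntegral.integral_add hf0 hsm, intervalIntegral.integral_smul]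
    show Xe ε t - Xe 0 t - ε • D t = _
    rw [e1', hInt, e0, eD]
    abel
  -- Gronwall
  set C0 : ℝ := ((d:ℝ) * cK) * ((d:ℝ) * cA) with hC0
  have hC00 : 0 ≤ C0 := by positivity
  have hnormineq : ∀ t ∈ Icc (0:ℝ) T, ‖Z t‖ ≤ C0 * ∫ s in (0:ℝ)..t, ‖Z s‖ := by
    intro t ht
    obtain ⟨ht0, htT⟩ := ht
    have hsubI : Icc (0:ℝ) t ⊆ Icc (0:ℝ) T := Icc_subset_Icc le_rfl htT
    have Kc : ContinuousOn (fun s => K t s) (Icc (0:ℝ) T) :=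
      kernel_cont_right hK hT' ⟨ht0, htT⟩
    have hgc : ContinuousOn (fun s => K t s *ᵥ (A s *ᵥ Z s)) (Icc (0:ℝ) T) :=
      contOn_mulVec Kc (contOn_mulVec hA hZc)
    have h1 : ‖Z t‖ ≤ ∫ s in (0:ℝ)..t, ‖K t s *ᵥ (A s *ᵥ Z s)‖ := by
      rw [hZeq t ⟨ht0, htT⟩]
      exact intervalIntegral.norm_integral_le_integral_norm ht0
    have h2 : (∫ s in (0:ℝ)..t, ‖K t s *ᵥ (A s *ᵥ Z s)‖)
        ≤ ∫ s in (0:ℝ)..t, C0 * ‖Z s‖ := by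
      apply intervalIntegral.integral_mono_on ht0
      · apply ContinuousOn.intervalIntegrable
        rw [uIcc_of_le ht0]
        exact (hgc.mono hsubI).norm
      · apply ContinuousOn.intervalIntegrable
        rw [uIcc_of_le ht0]
        exact ((hZc.mono hsubI).norm).const_smul C0
      · intro s hs
        have hsIcc : s ∈ Icc (0:ℝ) T := hsubI hs
        have hb1 : ‖K t s *ᵥ (A s *ᵥ Z s)‖ ≤ d * cK * ‖A s *ᵥ Z s‖ :=
          norm_mulVec_le' (fun i j => hcK t ⟨ht0, htT⟩ s hsIcc i j) hcK0
        have hb2 : ‖A s *ᵥ Z s‖ ≤ d * cA * ‖Z s‖ :=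
          norm_mulVec_le' (fun i j => hcA s hsIcc i j) hcA0
        calc ‖K t s *ᵥ (A s *ᵥ Z s)‖ ≤ d * cK * (d * cA * ‖Z s‖) :=
              hb1.trans (mul_le_mul_of_nonneg_left hb2 (by positivity))
          _ = C0 * ‖Z s‖ := by rw [hC0]; ring
    calc ‖Z t‖ ≤ ∫ s in (0:ℝ)..t, C0 * ‖Z s‖ := h1.trans h2
      _ = C0 * ∫ s in (0:ℝ)..t, ‖Z s‖ := intervalIntegral.integral_const_mul _ _
  have hzero : ∀ t ∈ Icc (0:ℝ) T, ‖Z t‖ = 0 :=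
    volterra_zero hC00 hZc.norm (fun t _ => norm_nonneg _) hnormineq
  intro t ht
  have hZ0 : Z t = 0 := norm_eq_zero.1 (hzero t ht)
  have : Xe ε t - (Xe 0 t + ε • D t) = 0 := by
    rw [← sub_sub]
    exact hZ0
  exact sub_eq_zero.1 this

/-- Gâteaux differentiability of the cost functional `J`, with the explicit
derivative `∫₀ᵀ (D^h)ᵀ((Q+Q̄)X^α − Q̄Sm) dt + (D^h_T)ᵀ((Q+Q̄)X^α_T − Q̄Sm_T) + ∫₀ᵀ αᵀRh dt`.
Here `Xe ε` denotes the state associated with the control `α + εh`. -/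
theorem cost_gateaux_derivative
    (T : ℝ) (hT : 0 < T) (d κ : ℕ)
    (K : ℝ → ℝ → Mat d) (hK : IsFlowKernel T d K)
    (A C : ℝ → Mat d) (B : ℝ → Matrix (Fin d) (Fin κ) ℝ)
    (R : ℝ → Matrix (Fin κ) (Fin κ) ℝ) (Qt Qbt St : ℝ → Mat d)
    (Q Qb S : Mat d) (lam : ℝ) (hlam : 0 < lam)
    (hA : ContinuousOn A (Icc (0:ℝ) T)) (hC : ContinuousOn C (Icc (0:ℝ) T))
    (hB : ContinuousOn B (Icc (0:ℝ) T)) (hR : ContinuousOn R (Icc (0:ℝ) T))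
    (hQt : ContinuousOn Qt (Icc (0:ℝ) T)) (hQbt : ContinuousOn Qbt (Icc (0:ℝ) T))
    (hSt : ContinuousOn St (Icc (0:ℝ) T))
    (hRpos : ∀ t ∈ Icc (0:ℝ) T, (R t - lam • (1 : Matrix (Fin κ) (Fin κ) ℝ)).PosSemidef)
    (hQtpos : ∀ t ∈ Icc (0:ℝ) T, (Qt t).PosSemidef)
    (hQbtpos : ∀ t ∈ Icc (0:ℝ) T, (Qbt t).PosSemidef)
    (hQpos : Q.PosSemidef) (hQbpos : Qb.PosSemidef)
    (ξ : Vec d) (m M : ℝ → Vec d)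
    (hm : ContinuousOn m (Icc (0:ℝ) T)) (hM : ContinuousOn M (Icc (0:ℝ) T))
    (α h : ℝ → Vec κ)
    (hα : MemLp α 2 (volume.restrict (Icc (0:ℝ) T)))
    (hh : MemLp h 2 (volume.restrict (Icc (0:ℝ) T)))
    (Xe : ℝ → ℝ → Vec d)
    (hXe : ∀ ε : ℝ, SolvesState T K A C B ξ m M (fun t => α t + ε • h t) (Xe ε))
    (D : ℝ → Vec d) (hD : SolvesVar T K A B h D) :
    Tendsto
      (fun ε : ℝ =>
        (cost T R Qt Qbt St Q Qb S m (fun t => α t + ε • h t) (Xe ε)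
          - cost T R Qt Qbt St Q Qb S m α (Xe 0)) / ε)
      (nhdsWithin (0:ℝ) {(0:ℝ)}ᶜ)
      (nhds
        ((∫ t in (0:ℝ)..T,
            D t ⬝ᵥ ((Qt t + Qbt t) *ᵥ Xe 0 t - Qbt t *ᵥ (St t *ᵥ m t)))
          + D T ⬝ᵥ ((Q + Qb) *ᵥ Xe 0 T - Qb *ᵥ (S *ᵥ m T))
          + ∫ t in (0:ℝ)..T, α t ⬝ᵥ (R t *ᵥ h t))) := by
  have hT' : 0 ≤ T := hT.le
  have hTmem : T ∈ Icc (0:ℝ) T := ⟨hT', le_rfl⟩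
  have hlin := state_linear T hT hK hA hC hB hm hα hh hXe hD
  have hXc : ContinuousOn (Xe 0) (Icc (0:ℝ) T) := (hXe 0).1
  have hDc : ContinuousOn D (Icc (0:ℝ) T) := hD.1
  have hQtsym : ∀ t ∈ Icc (0:ℝ) T, (Qt t)ᵀ = Qt t := fun t ht => psd_transpose (hQtpos t ht)
  have hQbtsym : ∀ t ∈ Icc (0:ℝ) T, (Qbt t)ᵀ = Qbt t := fun t ht => psd_transpose (hQbtpos t ht)
  have hQsym : Qᵀ = Q := psd_transpose hQpos
  have hQbsym : Qbᵀ = Qb := psd_transpose hQbpos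
  have hRsym : ∀ t ∈ Icc (0:ℝ) T, (R t)ᵀ = R t := by
    intro t ht
    have h3 := psd_transpose (hRpos t ht)
    rw [Matrix.transpose_sub, Matrix.transpose_smul, Matrix.transpose_one] at h3
    exact sub_left_inj.1 h3
  -- interval integrability of the various scalar integrands
  have hii : ∀ {g : ℝ → ℝ}, ContinuousOn g (Icc (0:ℝ) T) → IntervalIntegrable g volume 0 T := by
    intro g hg
    apply ContinuousOn.intervalIntegrable
    rwa [uIcc_of_le hT']
  have hYc : ContinuousOn (fun t => Xe 0 t - St t *ᵥ m t) (Icc (0:ℝ) T) :=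
    hXc.sub (contOn_mulVec hSt hm)
  have hG1int : IntervalIntegrable
      (fun t => D t ⬝ᵥ ((Qt t + Qbt t) *ᵥ Xe 0 t - Qbt t *ᵥ (St t *ᵥ m t))) volume 0 T :=
    hii (contOn_dot hDc ((contOn_mulVec (hQt.add hQbt) hXc).sub
      (contOn_mulVec hQbt (contOn_mulVec hSt hm))))
  have hG2int : IntervalIntegrable (fun t => α t ⬝ᵥ (R t *ᵥ h t)) volume 0 T :=
    integrable_quad hT' hR hα hh
  have hI0int : IntervalIntegrable
      (fun t => (1/2 : ℝ) * (Xe 0 t ⬝ᵥ (Qt t *ᵥ Xe 0 t) + α t ⬝ᵥ (R t *ᵥ α t)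
        + (Xe 0 t - St t *ᵥ m t) ⬝ᵥ (Qbt t *ᵥ (Xe 0 t - St t *ᵥ m t)))) volume 0 T := by
    have heq : (fun t => (1/2 : ℝ) * (Xe 0 t ⬝ᵥ (Qt t *ᵥ Xe 0 t) + α t ⬝ᵥ (R t *ᵥ α t)
        + (Xe 0 t - St t *ᵥ m t) ⬝ᵥ (Qbt t *ᵥ (Xe 0 t - St t *ᵥ m t))))
        = fun t => ((1/2 : ℝ) * (Xe 0 t ⬝ᵥ (Qt t *ᵥ Xe 0 t)
            + (Xe 0 t - St t *ᵥ m t) ⬝ᵥ (Qbt t *ᵥ (Xe 0 t - St t *ᵥ m t))))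
          + (1/2 : ℝ) * (α t ⬝ᵥ (R t *ᵥ α t)) := by
      funext t; ring
    rw [heq]
    exact (hii (((contOn_dot hXc (contOn_mulVec hQt hXc)).add
        (contOn_dot hYc (contOn_mulVec hQbt hYc))).const_smul (1/2 : ℝ))).add
      ((integrable_quad hT' hR hα hα).const_mul (1/2 : ℝ))
  have hF1int : IntervalIntegrable
      (fun t => D t ⬝ᵥ ((Qt t + Qbt t) *ᵥ Xe 0 t - Qbt t *ᵥ (St t *ᵥ m t))
        + α t ⬝ᵥ (R t *ᵥ h t)) volume 0 T := hG1int.add hG2int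
  have hF2int : IntervalIntegrable
      (fun t => (1/2 : ℝ) * (D t ⬝ᵥ (Qt t *ᵥ D t) + h t ⬝ᵥ (R t *ᵥ h t)
        + D t ⬝ᵥ (Qbt t *ᵥ D t))) volume 0 T := by
    have heq : (fun t => (1/2 : ℝ) * (D t ⬝ᵥ (Qt t *ᵥ D t) + h t ⬝ᵥ (R t *ᵥ h t)
        + D t ⬝ᵥ (Qbt t *ᵥ D t)))
        = fun t => ((1/2 : ℝ) * (D t ⬝ᵥ (Qt t *ᵥ D t) + D t ⬝ᵥ (Qbt t *ᵥ D t)))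
          + (1/2 : ℝ) * (h t ⬝ᵥ (R t *ᵥ h t)) := by
      funext t; ring
    rw [heq]
    exact (hii (((contOn_dot hDc (contOn_mulVec hQt hDc)).add
        (contOn_dot hDc (contOn_mulVec hQbt hDc))).const_smul (1/2 : ℝ))).add
      ((integrable_quad hT' hR hh hh).const_mul (1/2 : ℝ))
  set L : ℝ := (∫ t in (0:ℝ)..T,
      D t ⬝ᵥ ((Qt t + Qbt t) *ᵥ Xe 0 t - Qbt t *ᵥ (St t *ᵥ m t)))
    + D T ⬝ᵥ ((Q + Qb) *ᵥ Xe 0 T - Qb *ᵥ (S *ᵥ m T))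
    + ∫ t in (0:ℝ)..T, α t ⬝ᵥ (R t *ᵥ h t) with hL
  set Q2 : ℝ := (∫ t in (0:ℝ)..T, (1/2 : ℝ) * (D t ⬝ᵥ (Qt t *ᵥ D t)
      + h t ⬝ᵥ (R t *ᵥ h t) + D t ⬝ᵥ (Qbt t *ᵥ D t)))
    + (1/2 : ℝ) * (D T ⬝ᵥ (Q *ᵥ D T) + D T ⬝ᵥ (Qb *ᵥ (D T))) with hQ2
  have key : ∀ ε : ℝ,
      cost T R Qt Qbt St Q Qb S m (fun t => α t + ε • h t) (Xe ε)
        - cost T R Qt Qbt St Q Qb S m α (Xe 0) = ε * L + ε ^ 2 * Q2 := by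
    intro ε
    have hcong : EqOn
        (fun t => (1/2 : ℝ) * (Xe ε t ⬝ᵥ (Qt t *ᵥ Xe ε t)
          + (α t + ε • h t) ⬝ᵥ (R t *ᵥ (α t + ε • h t))
          + (Xe ε t - St t *ᵥ m t) ⬝ᵥ (Qbt t *ᵥ (Xe ε t - St t *ᵥ m t))))
        (fun t => ((1/2 : ℝ) * (Xe 0 t ⬝ᵥ (Qt t *ᵥ Xe 0 t) + α t ⬝ᵥ (R t *ᵥ α t)
            + (Xe 0 t - St t *ᵥ m t) ⬝ᵥ (Qbt t *ᵥ (Xe 0 t - St t *ᵥ m t)))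
          + ε * (D t ⬝ᵥ ((Qt t + Qbt t) *ᵥ Xe 0 t - Qbt t *ᵥ (St t *ᵥ m t))
            + α t ⬝ᵥ (R t *ᵥ h t))
          + ε ^ 2 * ((1/2 : ℝ) * (D t ⬝ᵥ (Qt t *ᵥ D t) + h t ⬝ᵥ (R t *ᵥ h t)
            + D t ⬝ᵥ (Qbt t *ᵥ D t)))))
        (uIcc 0 T) := by
      intro t ht
      rw [uIcc_of_le hT'] at ht
      simp only
      rw [hlin ε t ht]
      rw [show Xe 0 t + ε • D t - St t *ᵥ m t = (Xe 0 t - St t *ᵥ m t) + ε • D t from by abel]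
      rw [quad_expand' (hQtsym t ht) (Xe 0 t) (D t) ε,
        quad_expand' (hRsym t ht) (α t) (h t) ε,
        quad_expand' (hQbtsym t ht) (Xe 0 t - St t *ᵥ m t) (D t) ε,
        dot_symm (hRsym t ht) (h t) (α t)]
      rw [show D t ⬝ᵥ ((Qt t + Qbt t) *ᵥ Xe 0 t - Qbt t *ᵥ (St t *ᵥ m t))
          = D t ⬝ᵥ (Qt t *ᵥ Xe 0 t) + D t ⬝ᵥ (Qbt t *ᵥ (Xe 0 t - St t *ᵥ m t)) from by
        rw [Matrix.add_mulVec, Matrix.mulVec_sub, dotProduct_sub, dotProduct_add,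
          dotProduct_sub]
        ring]
      ring
    have hIeq : (∫ t in (0:ℝ)..T, (1/2 : ℝ) * (Xe ε t ⬝ᵥ (Qt t *ᵥ Xe ε t)
          + (α t + ε • h t) ⬝ᵥ (R t *ᵥ (α t + ε • h t))
          + (Xe ε t - St t *ᵥ m t) ⬝ᵥ (Qbt t *ᵥ (Xe ε t - St t *ᵥ m t))))
        = (∫ t in (0:ℝ)..T, (1/2 : ℝ) * (Xe 0 t ⬝ᵥ (Qt t *ᵥ Xe 0 t) + α t ⬝ᵥ (R t *ᵥ α t)
            + (Xe 0 t - St t *ᵥ m t) ⬝ᵥ (Qbt t *ᵥ (Xe 0 t - St t *ᵥ m t))))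
          + ε * ((∫ t in (0:ℝ)..T, D t ⬝ᵥ ((Qt t + Qbt t) *ᵥ Xe 0 t - Qbt t *ᵥ (St t *ᵥ m t)))
            + ∫ t in (0:ℝ)..T, α t ⬝ᵥ (R t *ᵥ h t))
          + ε ^ 2 * ∫ t in (0:ℝ)..T, (1/2 : ℝ) * (D t ⬝ᵥ (Qt t *ᵥ D t)
            + h t ⬝ᵥ (R t *ᵥ h t) + D t ⬝ᵥ (Qbt t *ᵥ D t)) := by
      rw [intervalIntegral.integral_congr hcong]
      rw [intervalIntegral.integral_add (hI0int.add (hF1int.const_mul ε))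
        (hF2int.const_mul (ε ^ 2))]
      rw [intervalIntegral.integral_add hI0int (hF1int.const_mul ε)]
      rw [intervalIntegral.integral_const_mul ε, intervalIntegral.integral_const_mul (ε ^ 2)]
      rw [intervalIntegral.integral_add hG1int hG2int]
    simp only [cost]
    rw [hIeq]
    rw [hlin ε T hTmem]
    rw [show Xe 0 T + ε • D T - S *ᵥ m T = (Xe 0 T - S *ᵥ m T) + ε • D T from by abel]
    rw [quad_expand' hQsym (Xe 0 T) (D T) ε,
      quad_expand' hQbsym (Xe 0 T - S *ᵥ m T) (D T) ε]
    rw [hL, hQ2]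
    rw [show D T ⬝ᵥ ((Q + Qb) *ᵥ Xe 0 T - Qb *ᵥ (S *ᵥ m T))
        = D T ⬝ᵥ (Q *ᵥ Xe 0 T) + D T ⬝ᵥ (Qb *ᵥ (Xe 0 T - S *ᵥ m T)) from by
      rw [Matrix.add_mulVec, Matrix.mulVec_sub, dotProduct_sub, dotProduct_add,
        dotProduct_sub]
      ring]
    ring
  have htend : Tendsto (fun ε : ℝ => L + ε * Q2) (nhdsWithin (0:ℝ) {(0:ℝ)}ᶜ) (nhds L) := by
    have hc : Continuous (fun ε : ℝ => L + ε * Q2) :=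
      continuous_const.add (continuous_id.mul continuous_const)
    refine Tendsto.mono_left ?_ nhdsWithin_le_nhds
    have h2 := hc.tendsto 0
    simpa using h2
  refine Tendsto.congr' ?_ htend
  filter_upwards [self_mem_nhdsWithin] with ε hε
  have hε0 : ε ≠ 0 := hε
  rw [key ε]
  field_simp
end
end

section
/- Let Â : [0,T] → ℝ^{d×d}, B̂ : [0,T] → ℝ^{d×κ}, R̂ : [0,T] → ℝ^{κ×κ}, Q̂ : [0,T] → ℝ^{d×d} and D̂, q̂ : [0,T] → ℝ^d be continuous, suppose R̂_t − c·Id ⪰ 0 for every t for some c > 0 and Q̂_t ⪰ 0 for every t, and let G ∈ ℝ^{d×d} with G ⪰ 0, g ∈ ℝ^d, ξ ∈ ℝ^d. Then the forward–backward system x_t = ξ + ∫₀ᵗ (Â_s x_s − B̂_s R̂_s⁻¹ B̂_sᵀ y_s + D̂_s) ds, y_t = G x_T + g + ∫_t^T (Q̂_s x_s + Â_sᵀ y_s + q̂_s) ds has exactly one pair of continuous solutions (x, y) on [0,T]; moreover y_t = P_t x_t + Π_t for every t, where P is the unique C¹ solution of dP_t/dt = −(P_t Â_t + Â_tᵀ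 P_t − P_t B̂_t R̂_t⁻¹ B̂_tᵀ P_t + Q̂_t), P_T = G, and Π is the unique C¹ solution of dΠ_t/dt = −(Â_t − B̂_t R̂_t⁻¹ B̂_tᵀ P_t)ᵀ Π_t − P_t D̂_t − q̂_t, Π_T = g. -/
open MeasureTheory Matrix Set

noncomputable section

attribute [local instance] Matrix.normedAddCommGroup Matrix.normedSpace

open intervalIntegral
set_option maxHeartbeats 1000000

section helpers
variable {E F : Type*} [NormedAddCommGroup E] [NormedSpace ℝ E] [CompleteSpace E]
  [NormedAddCommGroup F] [NormedSpace ℝ F]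

/-- From deriv within `Icc a b` to deriv within `Ici t`, for `t < b`. -/
lemma derivIcc_to_Ici {f : ℝ → E} {d : E} {a b t : ℝ} (hta : a ≤ t) (htb : t < b)
    (h : HasDerivWithinAt f d (Icc a b) t) : HasDerivWithinAt f d (Ici t) t := by
  apply h.mono_of_mem_nhdsWithin
  refine mem_nhdsWithin.mpr ⟨Iio b, isOpen_Iio, htb, fun u hu => ⟨hta.trans hu.2, le_of_lt hu.1⟩⟩

lemma derivIcc_to_Iic {f : ℝ → E} {d : E} {a b t : ℝ} (hta : a < t) (htb : t ≤ b)
    (h : HasDerivWithinAt f d (Icc a b) t) : HasDerivWithinAt f d (Iic t) t := by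
  apply h.mono_of_mem_nhdsWithin
  refine mem_nhdsWithin.mpr ⟨Ioi a, isOpen_Ioi, hta, fun u hu => ⟨le_of_lt hu.1, hu.2.trans htb⟩⟩

lemma derivIcc_to_Ioi {f : ℝ → E} {d : E} {a b t : ℝ} (hta : a ≤ t) (htb : t < b)
    (h : HasDerivWithinAt f d (Icc a b) t) : HasDerivWithinAt f d (Ioi t) t :=
  (derivIcc_to_Ici hta htb h).mono Ioi_subset_Ici_self

lemma contOn_of_derivIcc {f : ℝ → E} {d : ℝ → E} {a b : ℝ}
    (h : ∀ t ∈ Icc a b, HasDerivWithinAt f (d t) (Icc a b) t) :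
    ContinuousOn f (Icc a b) := fun t ht => (h t ht).continuousWithinAt

/-- FTC-2 on `Icc a b`. -/
lemma integral_of_derivIcc {f F : ℝ → E} {a b : ℝ} (hab : a ≤ b)
    (hF : ContinuousOn F (Icc a b))
    (h : ∀ t ∈ Icc a b, HasDerivWithinAt f (F t) (Icc a b) t) :
    ∀ t ∈ Icc a b, f t = f a + ∫ s in a..t, F s := by
  intro t ht
  have h1 : ∫ s in a..t, F s = f t - f a := by
    apply integral_eq_sub_of_hasDeriv_right_of_le ht.1
    · exact (contOn_of_derivIcc h).mono (Icc_subset_Icc_right ht.2)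
    · intro u hu
      exact derivIcc_to_Ioi hu.1.le (lt_of_lt_of_le hu.2 ht.2)
        (h u ⟨hu.1.le, hu.2.le.trans ht.2⟩)
    · exact (hF.mono (Icc_subset_Icc_right ht.2)).intervalIntegrable_of_Icc ht.1
  rw [h1]; abel

/-- FTC-1: from integral equation to derivative, on `Icc a b`. -/
lemma derivIcc_of_integral {f F : ℝ → E} {a b : ℝ} {c : E}
    (hF : ContinuousOn F (Icc a b))
    (h : ∀ t ∈ Icc a b, f t = c + ∫ s in a..t, F s) (hab : a ≤ b) :
    ∀ t ∈ Icc a b, HasDerivWithinAt f (F t) (Icc a b) t := by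
  intro t ht
  set π : ℝ → ℝ := fun s => max a (min s b) with hπ
  have hπc : Continuous π := by fun_prop
  have hπm : ∀ s, π s ∈ Icc a b := fun s => ⟨le_max_left _ _, max_le hab (min_le_right _ _)⟩
  have hπeq : ∀ s ∈ Icc a b, π s = s := fun s hs => by
    simp [hπ, min_eq_left hs.2, max_eq_right hs.1]
  set G : ℝ → E := fun s => F (π s) with hG
  have hGc : Continuous G := hF.comp_continuous hπc hπm
  have hd : HasDerivAt (fun v => c + ∫ s in a..v, G s) (G t) t := by
    have := intervalIntegral.integral_hasDerivAt_right
      (f := G) (a := a) (b := t) (hGc.intervalIntegrable a t)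
      (hGc.stronglyMeasurable.stronglyMeasurableAtFilter) hGc.continuousAt
    exact this.const_add c
  have heq : EqOn f (fun v => c + ∫ s in a..v, G s) (Icc a b) := by
    intro u hu
    rw [h u hu]
    congr 1
    apply intervalIntegral.integral_congr
    intro s hs
    rw [uIcc_of_le hu.1] at hs
    exact (congrArg F (hπeq s ⟨hs.1, hs.2.trans hu.2⟩)).symm
  have h2 := (hd.hasDerivWithinAt (s := Icc a b)).congr heq (heq ht)
  simpa only [hG, hπeq t ht] using h2



/-- Glue two solutions at a junction point. -/
lemma ode_glue {v : ℝ → E → E} {a b m : ℝ} (ham : a ≤ m) (hmb : m ≤ b)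
    {f₁ f₂ : ℝ → E}
    (h₁ : ∀ t ∈ Icc a m, HasDerivWithinAt f₁ (v t (f₁ t)) (Icc a m) t)
    (h₂ : ∀ t ∈ Icc m b, HasDerivWithinAt f₂ (v t (f₂ t)) (Icc m b) t)
    (heq : f₁ m = f₂ m) :
    ∃ f : ℝ → E, EqOn f f₁ (Icc a m) ∧ EqOn f f₂ (Icc m b) ∧
      ∀ t ∈ Icc a b, HasDerivWithinAt f (v t (f t)) (Icc a b) t := by
  classical
  refine ⟨fun t => if t ≤ m then f₁ t else f₂ t, ?_, ?_, ?_⟩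
  · intro t ht; simp [ht.2]
  · intro t ht
    rcases eq_or_lt_of_le ht.1 with h | h
    · simp [← h, heq]
    · simp [not_le.mpr h]
  · intro t ht
    set f : ℝ → E := fun t => if t ≤ m then f₁ t else f₂ t with hf
    have e₁ : EqOn f f₁ (Icc a m) := fun u hu => by simp [hf, hu.2]
    have e₂ : EqOn f f₂ (Icc m b) := fun u hu => by
      rcases eq_or_lt_of_le hu.1 with h | h
      · simp [hf, ← h, heq]
      · simp [hf, not_le.mpr h]
    rcases lt_trichotomy t m with h | h | h
    · -- t < m : near t, Icc a b agrees with Icc a m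
      have hd := (h₁ t ⟨ht.1, h.le⟩).congr e₁ (e₁ ⟨ht.1, h.le⟩)
      rw [show f t = f₁ t from e₁ ⟨ht.1, h.le⟩]  
      apply hd.mono_of_mem_nhdsWithin
      refine mem_nhdsWithin.mpr ⟨Iio m, isOpen_Iio, h, fun u hu => ⟨hu.2.1, hu.1.le⟩⟩
    · -- t = m : union of the two
      subst h
      have hd₁ := (h₁ t ⟨ht.1, le_refl t⟩).congr e₁ (e₁ ⟨ht.1, le_refl t⟩)
      have hd₂ := (h₂ t ⟨le_refl t, hmb⟩).congr e₂ (e₂ ⟨le_refl t, hmb⟩)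
      have hd₂' : HasDerivWithinAt f (v t (f t)) (Icc t b) t := by
        have : f t = f₂ t := e₂ ⟨le_refl t, hmb⟩
        rwa [this]
      have hd₁' : HasDerivWithinAt f (v t (f t)) (Icc a t) t := by
        have : f t = f₁ t := e₁ ⟨ht.1, le_refl t⟩
        rwa [this]
      have := hd₁'.union hd₂'
      rwa [Icc_union_Icc_eq_Icc ht.1 hmb] at this
    · have hd := (h₂ t ⟨h.le, ht.2⟩).congr e₂ (e₂ ⟨h.le, ht.2⟩)
      rw [show f t = f₂ t from e₂ ⟨h.le, ht.2⟩]  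
      apply hd.mono_of_mem_nhdsWithin
      refine mem_nhdsWithin.mpr ⟨Ioi m, isOpen_Ioi, h, fun u hu => ⟨hu.1.le, hu.2.2⟩⟩


variable {v : ℝ → E → E} {K : NNReal}

lemma hasDerivWithinAt_singleton' (f : ℝ → E) (x : ℝ) (d : E) :
    HasDerivWithinAt f d {x} x := by
  simp only [HasDerivWithinAt, HasDerivAtFilter, nhdsWithin_singleton,
    hasFDerivAtFilter_iff_isLittleO, Asymptotics.isLittleO_pure]
  simp

/-- One Picard–Lindelöf step for a globally Lipschitz field. -/
lemma ode_step (hlip : ∀ t, LipschitzWith K (v t))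
    (hcont : ∀ x, Continuous fun t => v t x)
    {s s' : ℝ} (hss : s ≤ s') (hstep : s' - s ≤ (2 * ((K:ℝ) + 1))⁻¹) (x₀ : E) :
    ∃ f : ℝ → E, f s = x₀ ∧ ∀ t ∈ Icc s s', HasDerivWithinAt f (v t (f t)) (Icc s s') t := by
  set h : ℝ := (2 * ((K:ℝ) + 1))⁻¹ with hh
  have hK0 : (0:ℝ) ≤ K := K.coe_nonneg
  have hh0 : 0 < h := by positivity
  obtain ⟨C₀, hC₀⟩ := (isCompact_Icc (a := s) (b := s')).exists_bound_of_continuousOn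
    ((hcont x₀).continuousOn)
  set Cx : ℝ := max C₀ 0 with hCx
  have hCx0 : 0 ≤ Cx := le_max_right _ _
  have hCxb : ∀ t ∈ Icc s s', ‖v t x₀‖ ≤ Cx := fun t ht => (hC₀ t ht).trans (le_max_left _ _)
  set R : ℝ := 2 * h * Cx + 1 with hR
  have hR0 : (0:ℝ) ≤ R := by positivity
  set C : ℝ := Cx + K * R with hC
  have hKh : (K:ℝ) * h ≤ 1/2 := by
    rw [hh]
    rw [mul_inv_le_iff₀ (by positivity)]
    nlinarith
  have hCpos0 : 0 ≤ C := by positivity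
  have pl : IsPicardLindelof (fun t x => v t x) (tmin := s) (tmax := s') ⟨s, le_refl s, hss⟩ x₀
      ⟨R, hR0⟩ 0 ⟨C, hCpos0⟩ K := by
    constructor
    · exact fun t _ => (hlip t).lipschitzOnWith
    · exact fun x _ => (hcont x).continuousOn
    · intro t ht x hx
      show ‖v t x‖ ≤ C
      have h1 : ‖v t x - v t x₀‖ ≤ K * ‖x - x₀‖ := by
        simpa [dist_eq_norm] using (hlip t).dist_le_mul x x₀
      have h2 : ‖x - x₀‖ ≤ R := by
          have hx' : x ∈ Metric.closedBall x₀ R := hx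
          simpa [dist_eq_norm] using hx'
      calc ‖v t x‖ = ‖v t x - v t x₀ + v t x₀‖ := by rw [sub_add_cancel]
        _ ≤ ‖v t x - v t x₀‖ + ‖v t x₀‖ := norm_add_le _ _
        _ ≤ K * R + Cx := by
            refine add_le_add (h1.trans ?_) (hCxb t ht)
            exact mul_le_mul_of_nonneg_left h2 hK0
        _ = C := by rw [hC]; ring
    · show C * max (s' - s) (s - s) ≤ R - 0
      rw [sub_zero]
      have : max (s' - s) (s - s) = s' - s := max_eq_left (by linarith)
      rw [this]
      have hCpos : 0 ≤ C := by positivity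
      calc C * (s' - s) ≤ C * h := by
            apply mul_le_mul_of_nonneg_left hstep hCpos
        _ = Cx * h + (K * h) * R := by rw [hC]; ring
        _ ≤ Cx * h + (1/2) * R := by
            refine add_le_add_right (mul_le_mul_of_nonneg_right hKh hR0) _
        _ ≤ R := by rw [hR]; nlinarith
  obtain ⟨f, hf0, hf⟩ := pl.exists_eq_forall_mem_Icc_hasDerivWithinAt₀
  exact ⟨f, hf0, hf⟩

/-- Forward global existence for a globally Lipschitz field. -/
lemma ode_forward (hlip : ∀ t, LipschitzWith K (v t))
    (hcont : ∀ x, Continuous fun t => v t x) :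
    ∀ (n : ℕ) (s b' : ℝ), s ≤ b' → b' - s ≤ n * (2 * ((K:ℝ) + 1))⁻¹ → ∀ x₀ : E,
    ∃ f : ℝ → E, f s = x₀ ∧ ∀ t ∈ Icc s b', HasDerivWithinAt f (v t (f t)) (Icc s b') t := by
  set h : ℝ := (2 * ((K:ℝ) + 1))⁻¹ with hh
  have hh0 : 0 < h := by positivity
  intro n
  induction n with
  | zero =>
    intro s b' hsb hb x₀
    have : b' = s := le_antisymm (by simpa using hb) hsb
    subst this
    refine ⟨fun _ => x₀, rfl, ?_⟩
    intro t ht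
    have : t = b' := le_antisymm ht.2 ht.1
    subst this
    rw [Icc_self]
    exact hasDerivWithinAt_singleton' _ _ _
  | succ n ih =>
    intro s b' hsb hb x₀
    by_cases hcase : b' - s ≤ h
    · exact ode_step hlip hcont hsb hcase x₀
    · push_neg at hcase
      set m : ℝ := s + h with hm
      have hsm : s ≤ m := by linarith
      have hmb : m ≤ b' := by linarith
      obtain ⟨f₁, hf₁0, hf₁⟩ := ode_step hlip hcont hsm (by rw [hm]; simp only [add_sub_cancel_left]; exact le_rfl) x₀
      obtain ⟨f₂, hf₂0, hf₂⟩ := ih m b' hmb (by push_cast; push_cast at hb; linarith) (f₁ m)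
      obtain ⟨f, he₁, he₂, hf⟩ := ode_glue hsm hmb hf₁ hf₂ (by rw [hf₂0])
      exact ⟨f, by rw [he₁ ⟨le_refl s, hsm⟩, hf₁0], hf⟩


variable {v : ℝ → E → E} {K : NNReal}

lemma ode_backward (hlip : ∀ t, LipschitzWith K (v t))
    (hcont : ∀ x, Continuous fun t => v t x)
    (n : ℕ) (a' s : ℝ) (has : a' ≤ s) (hb : s - a' ≤ n * (2 * ((K:ℝ) + 1))⁻¹) (x₀ : E) :
    ∃ f : ℝ → E, f s = x₀ ∧ ∀ t ∈ Icc a' s, HasDerivWithinAt f (v t (f t)) (Icc a' s) t := by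
  set w : ℝ → E → E := fun t x => -(v (-t) x) with hw
  have hlip' : ∀ t, LipschitzWith K (w t) := fun t => (hlip (-t)).neg
  have hcont' : ∀ x, Continuous fun t => w t x :=
    fun x => ((hcont x).comp continuous_neg).neg
  obtain ⟨g, hg0, hg⟩ := ode_forward hlip' hcont' n (-s) (-a') (by linarith)
    (by push_cast; linarith) x₀
  refine ⟨fun t => g (-t), by simpa using hg0, ?_⟩
  intro t ht
  have hmt : -t ∈ Icc (-s) (-a') := ⟨by linarith [ht.2], by linarith [ht.1]⟩
  have hgd := hg (-t) hmt
  have hmaps : MapsTo (fun u : ℝ => -u) (Icc a' s) (Icc (-s) (-a')) :=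
    fun u hu => ⟨show -s ≤ -u by linarith [hu.2], show -u ≤ -a' by linarith [hu.1]⟩
  have hneg : HasDerivWithinAt (fun u : ℝ => -u) (-1) (Icc a' s) t :=
    (hasDerivAt_neg t).hasDerivWithinAt
  have := HasDerivWithinAt.scomp t hgd hneg hmaps
  simpa [hw, neg_smul, one_smul, Function.comp_def] using this

lemma ode_exists (hlip : ∀ t, LipschitzWith K (v t))
    (hcont : ∀ x, Continuous fun t => v t x)
    {a b t₀ : ℝ} (ht₀ : t₀ ∈ Icc a b) (x₀ : E) :
    ∃ f : ℝ → E, f t₀ = x₀ ∧ ∀ t ∈ Icc a b, HasDerivWithinAt f (v t (f t)) (Icc a b) t := by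
  have hh0 : (0:ℝ) < (2 * ((K:ℝ) + 1))⁻¹ := by positivity
  obtain ⟨n, hn⟩ := exists_nat_ge ((b - a) / (2 * ((K:ℝ) + 1))⁻¹)
  have hn' : b - a ≤ n * (2 * ((K:ℝ) + 1))⁻¹ := by
    rw [div_le_iff₀ hh0] at hn; linarith
  obtain ⟨f₂, hf₂0, hf₂⟩ := ode_forward hlip hcont n t₀ b ht₀.2
    (by linarith [ht₀.1]) x₀
  obtain ⟨f₁, hf₁0, hf₁⟩ := ode_backward hlip hcont n a t₀ ht₀.1
    (by linarith [ht₀.2]) x₀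
  obtain ⟨f, he₁, he₂, hf⟩ := ode_glue ht₀.1 ht₀.2 hf₁ hf₂ (by rw [hf₁0, hf₂0])
  exact ⟨f, by rw [he₁ ⟨ht₀.1, le_refl t₀⟩, hf₁0], hf⟩

lemma ode_uniq (hlip : ∀ t, LipschitzWith K (v t))
    {a b t₀ : ℝ} (ht₀ : t₀ ∈ Icc a b) {f g : ℝ → E}
    (hf : ∀ t ∈ Icc a b, HasDerivWithinAt f (v t (f t)) (Icc a b) t)
    (hg : ∀ t ∈ Icc a b, HasDerivWithinAt g (v t (g t)) (Icc a b) t)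
    (heq : f t₀ = g t₀) : EqOn f g (Icc a b) := by
  have hfc := contOn_of_derivIcc hf
  have hgc := contOn_of_derivIcc hg
  have hv : ∀ t, LipschitzOnWith K (v t) ((fun _ => univ) t) :=
    fun t => (hlip t).lipschitzOnWith
  have hright : EqOn f g (Icc t₀ b) := by
    apply ODE_solution_unique_of_mem_Icc_right (fun t _ => hv t)
      (hfc.mono (Icc_subset_Icc_left ht₀.1)) ?_ (fun _ _ => trivial)
      (hgc.mono (Icc_subset_Icc_left ht₀.1)) ?_ (fun _ _ => trivial) heq
    · exact fun t ht => derivIcc_to_Ici (ht₀.1.trans ht.1) ht.2 (hf t ⟨ht₀.1.trans ht.1, ht.2.le⟩)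
    · exact fun t ht => derivIcc_to_Ici (ht₀.1.trans ht.1) ht.2 (hg t ⟨ht₀.1.trans ht.1, ht.2.le⟩)
  have hleft : EqOn f g (Icc a t₀) := by
    apply ODE_solution_unique_of_mem_Icc_left (fun t _ => hv t)
      (hfc.mono (Icc_subset_Icc_right ht₀.2)) ?_ (fun _ _ => trivial)
      (hgc.mono (Icc_subset_Icc_right ht₀.2)) ?_ (fun _ _ => trivial) heq
    · exact fun t ht => derivIcc_to_Iic ht.1 (ht.2.trans ht₀.2) (hf t ⟨ht.1.le, ht.2.trans ht₀.2⟩)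
    · exact fun t ht => derivIcc_to_Iic ht.1 (ht.2.trans ht₀.2) (hg t ⟨ht.1.le, ht.2.trans ht₀.2⟩)
  intro t ht
  rcases le_total t t₀ with h | h
  · exact hleft ⟨ht.1, h⟩
  · exact hright ⟨h, ht.2⟩

/-- Existence and uniqueness on `Icc a b` with hypotheses only on `Icc a b`. -/
lemma ode_exists_Icc {a b : ℝ} (hab : a ≤ b)
    (hlip : ∀ t ∈ Icc a b, LipschitzWith K (v t))
    (hcont : ∀ x, ContinuousOn (fun t => v t x) (Icc a b))
    {t₀ : ℝ} (ht₀ : t₀ ∈ Icc a b) (x₀ : E) :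
    ∃ f : ℝ → E, f t₀ = x₀ ∧ ∀ t ∈ Icc a b, HasDerivWithinAt f (v t (f t)) (Icc a b) t := by
  set π : ℝ → ℝ := fun s => max a (min s b) with hπ
  have hπc : Continuous π := by fun_prop
  have hπm : ∀ s, π s ∈ Icc a b := fun s => ⟨le_max_left _ _, max_le hab (min_le_right _ _)⟩
  have hπeq : ∀ s ∈ Icc a b, π s = s := fun s hs => by
    simp [hπ, min_eq_left hs.2, max_eq_right hs.1]
  set w : ℝ → E → E := fun t x => v (π t) x with hw
  have hlip' : ∀ t, LipschitzWith K (w t) := fun t => hlip (π t) (hπm t)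
  have hcont' : ∀ x, Continuous fun t => w t x :=
    fun x => (hcont x).comp_continuous hπc hπm
  obtain ⟨f, hf0, hf⟩ := ode_exists hlip' hcont' ht₀ x₀
  refine ⟨f, hf0, fun t ht => ?_⟩
  have := hf t ht
  simpa only [hw, hπeq t ht] using this

lemma ode_uniq_Icc {a b : ℝ}
    (hlip : ∀ t ∈ Icc a b, LipschitzWith K (v t))
    {t₀ : ℝ} (ht₀ : t₀ ∈ Icc a b) {f g : ℝ → E}
    (hf : ∀ t ∈ Icc a b, HasDerivWithinAt f (v t (f t)) (Icc a b) t)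
    (hg : ∀ t ∈ Icc a b, HasDerivWithinAt g (v t (g t)) (Icc a b) t)
    (heq : f t₀ = g t₀) : EqOn f g (Icc a b) := by
  have hab : a ≤ b := ht₀.1.trans ht₀.2
  set π : ℝ → ℝ := fun s => max a (min s b) with hπ
  have hπm : ∀ s, π s ∈ Icc a b := fun s => ⟨le_max_left _ _, max_le hab (min_le_right _ _)⟩
  have hπeq : ∀ s ∈ Icc a b, π s = s := fun s hs => by
    simp [hπ, min_eq_left hs.2, max_eq_right hs.1]
  set w : ℝ → E → E := fun t x => v (π t) x with hw
  have hlip' : ∀ t, LipschitzWith K (w t) := fun t => hlip (π t) (hπm t)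
  apply ode_uniq hlip' ht₀ (f := f) (g := g) _ _ heq
  · intro t ht; have := hf t ht
    simp only [hw, hπeq t ht]; exact this
  · intro t ht; have := hg t ht
    simp only [hw, hπeq t ht]; exact this


end helpers

section mathelp
variable {l m n p : Type*} [Fintype l] [Fintype m] [Fintype n] [Fintype p]

lemma norm_mulVec_le (A : Matrix m n ℝ) (x : n → ℝ) :
    ‖A *ᵥ x‖ ≤ (Fintype.card n) * ‖A‖ * ‖x‖ := by
  have hnn : (0:ℝ) ≤ (Fintype.card n) * ‖A‖ * ‖x‖ := by positivity
  rw [pi_norm_le_iff_of_nonneg hnn]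
  intro i
  calc ‖(A *ᵥ x) i‖ = ‖∑ j, A i j * x j‖ := rfl
    _ ≤ ∑ j, ‖A i j * x j‖ := norm_sum_le _ _
    _ ≤ ∑ j : n, ‖A‖ * ‖x‖ := by
        refine Finset.sum_le_sum fun j _ => ?_
        rw [norm_mul]
        exact mul_le_mul (A.norm_entry_le_entrywise_sup_norm) (norm_le_pi_norm x j)
          (norm_nonneg _) (norm_nonneg _)
    _ = (Fintype.card n) * ‖A‖ * ‖x‖ := by
        rw [Finset.sum_const, Finset.card_univ, nsmul_eq_mul]; ring

lemma norm_matmul_le (A : Matrix m n ℝ) (B : Matrix n p ℝ) :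
    ‖A * B‖ ≤ (Fintype.card n) * ‖A‖ * ‖B‖ := by
  have hnn : (0:ℝ) ≤ (Fintype.card n) * ‖A‖ * ‖B‖ := by positivity
  rw [Matrix.norm_le_iff hnn]
  intro i j
  calc ‖(A * B) i j‖ = ‖∑ k, A i k * B k j‖ := by rw [Matrix.mul_apply]
    _ ≤ ∑ k, ‖A i k * B k j‖ := norm_sum_le _ _
    _ ≤ ∑ k : n, ‖A‖ * ‖B‖ := by
        refine Finset.sum_le_sum fun k _ => ?_
        rw [norm_mul]
        exact mul_le_mul (A.norm_entry_le_entrywise_sup_norm)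
          (B.norm_entry_le_entrywise_sup_norm) (norm_nonneg _) (norm_nonneg _)
    _ = (Fintype.card n) * ‖A‖ * ‖B‖ := by
        rw [Finset.sum_const, Finset.card_univ, nsmul_eq_mul]; ring

lemma norm_transpose_eq (A : Matrix m n ℝ) : ‖Aᵀ‖ = ‖A‖ := by
  apply le_antisymm
  · refine (Matrix.norm_le_iff (norm_nonneg A)).mpr fun i j => ?_
    exact A.norm_entry_le_entrywise_sup_norm
  · refine (Matrix.norm_le_iff (norm_nonneg Aᵀ)).mpr fun i j => ?_
    exact Aᵀ.norm_entry_le_entrywise_sup_norm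

variable {s : Set ℝ}

lemma contOn_mulVec_s12 {M : ℝ → Matrix m n ℝ} {u : ℝ → n → ℝ}
    (hM : ContinuousOn M s) (hu : ContinuousOn u s) :
    ContinuousOn (fun t => M t *ᵥ u t) s := by
  rw [continuousOn_iff_continuous_restrict] at *
  exact Continuous.matrix_mulVec hM hu

lemma contOn_matmul {M : ℝ → Matrix m n ℝ} {N : ℝ → Matrix n p ℝ}
    (hM : ContinuousOn M s) (hN : ContinuousOn N s) :
    ContinuousOn (fun t => M t * N t) s := by
  rw [continuousOn_iff_continuous_restrict] at *
  exact Continuous.matrix_mul hM hN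

lemma contOn_transpose {M : ℝ → Matrix m n ℝ} (hM : ContinuousOn M s) :
    ContinuousOn (fun t => (M t)ᵀ) s := by
  rw [continuousOn_iff_continuous_restrict] at *
  exact Continuous.matrix_transpose hM

lemma contOn_inv [DecidableEq m] {M : ℝ → Matrix m m ℝ} (hM : ContinuousOn M s)
    (hdet : ∀ t ∈ s, (M t).det ≠ 0) :
    ContinuousOn (fun t => (M t)⁻¹) s := by
  have h1 : ContinuousOn (fun t => ((M t).det)⁻¹ • (M t).adjugate) s := by
    apply ContinuousOn.fun_smul
    · apply ContinuousOn.inv₀ _ hdet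
      rw [continuousOn_iff_continuous_restrict] at *
      exact Continuous.matrix_det hM
    · rw [continuousOn_iff_continuous_restrict] at *
      exact Continuous.matrix_adjugate hM
  refine h1.congr fun t ht => ?_
  rw [Matrix.inv_def, Ring.inverse_eq_inv']

-- derivative helpers
lemma hasDerivWithinAt_comp_proj {f : ℝ → n → ℝ} {d : n → ℝ} {t : ℝ} (i : n)
    (h : HasDerivWithinAt f d s t) :
    HasDerivWithinAt (fun u => f u i) (d i) s t :=
  hasDerivWithinAt_pi.mp h i

lemma hasDerivWithinAt_dotProduct {x y : ℝ → n → ℝ} {x' y' : n → ℝ} {t : ℝ}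
    (hx : HasDerivWithinAt x x' s t) (hy : HasDerivWithinAt y y' s t) :
    HasDerivWithinAt (fun u => x u ⬝ᵥ y u) (x' ⬝ᵥ y t + x t ⬝ᵥ y') s t := by
  have : ∀ u, x u ⬝ᵥ y u = ∑ i, x u i * y u i := fun u => rfl
  simp only [this]
  have hsum : HasDerivWithinAt (fun u => ∑ i, x u i * y u i)
      (∑ i, (x' i * y t i + x t i * y' i)) s t := by
    apply HasDerivWithinAt.fun_sum
    intro i _
    exact (hasDerivWithinAt_comp_proj i hx).mul (hasDerivWithinAt_comp_proj i hy)
  convert hsum using 1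
  simp [dotProduct, Finset.sum_add_distrib]

lemma hasDerivWithinAt_mulVec {M : ℝ → Matrix m n ℝ} {u : ℝ → n → ℝ}
    {M' : Matrix m n ℝ} {u' : n → ℝ} {t : ℝ}
    (hM : HasDerivWithinAt M M' s t) (hu : HasDerivWithinAt u u' s t) :
    HasDerivWithinAt (fun v => M v *ᵥ u v) (M' *ᵥ u t + M t *ᵥ u') s t := by
  rw [hasDerivWithinAt_pi]
  intro i
  have hMi : HasDerivWithinAt (fun v => M v i) (M' i) s t := hasDerivWithinAt_pi.mp hM i
  have h := hasDerivWithinAt_dotProduct (x := fun v => M v i) (y := u) hMi hu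
  exact h

end mathelp

section mathelp2
variable {m n : Type*} [Fintype m] [Fintype n] {s : Set ℝ}

lemma hasDerivWithinAt_matrix {M : ℝ → Matrix m n ℝ} {M' : Matrix m n ℝ} {t : ℝ} :
    HasDerivWithinAt M M' s t ↔ ∀ i j, HasDerivWithinAt (fun u => M u i j) (M' i j) s t := by
  exact hasDerivWithinAt_pi.trans (forall_congr' fun i => hasDerivWithinAt_pi)

lemma HasDerivWithinAt.matrix_transpose {M : ℝ → Matrix m n ℝ} {M' : Matrix m n ℝ} {t : ℝ}
    (h : HasDerivWithinAt M M' s t) :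
    HasDerivWithinAt (fun u => (M u)ᵀ) M'ᵀ s t := by
  rw [hasDerivWithinAt_matrix]
  intro i j
  exact hasDerivWithinAt_matrix.mp h j i

/-- reverse FTC-2 on `Icc a b`. -/
lemma integral_of_derivIcc' {E : Type*} [NormedAddCommGroup E] [NormedSpace ℝ E]
    [CompleteSpace E] {f F : ℝ → E} {a b : ℝ} (hab : a ≤ b)
    (hF : ContinuousOn F (Icc a b))
    (h : ∀ t ∈ Icc a b, HasDerivWithinAt f (F t) (Icc a b) t) :
    ∀ t ∈ Icc a b, f t = f b - ∫ s in t..b, F s := by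
  intro t ht
  have h1 : ∫ s in t..b, F s = f b - f t := by
    apply intervalIntegral.integral_eq_sub_of_hasDeriv_right_of_le ht.2
    · exact (contOn_of_derivIcc h).mono (Icc_subset_Icc_left ht.1)
    · intro u hu
      exact derivIcc_to_Ioi (ht.1.trans hu.1.le) hu.2
        (h u ⟨ht.1.trans hu.1.le, hu.2.le⟩)
    · exact (hF.mono (Icc_subset_Icc_left ht.1)).intervalIntegrable_of_Icc ht.2
  rw [h1]; abel

end mathelp2


section fld
variable {d : ℕ}

/-- The Hamiltonian vector field of the FBODE system. -/
def fld (Ah S Qh : ℝ → Mat d) (Dh qh : ℝ → Vec d) : ℝ → Vec d × Vec d → Vec d × Vec d :=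
  fun t z => (Ah t *ᵥ z.1 - S t *ᵥ z.2 + Dh t, -(Qh t *ᵥ z.1 + (Ah t)ᵀ *ᵥ z.2 + qh t))

lemma fld_sub (Ah S Qh : ℝ → Mat d) (Dh qh : ℝ → Vec d) (t : ℝ) (z w : Vec d × Vec d) :
    fld Ah S Qh Dh qh t z - fld Ah S Qh Dh qh t w
      = fld Ah S Qh (fun _ => 0) (fun _ => 0) t (z - w) := by
  simp only [fld, Prod.mk_sub_mk]
  rw [Prod.ext_iff]
  constructor <;> · simp only; funext i; simp [Matrix.mulVec_sub]; ring

lemma fld_add (Ah S Qh : ℝ → Mat d) (Dh qh : ℝ → Vec d) (t : ℝ) (z w : Vec d × Vec d) :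
    fld Ah S Qh Dh qh t z + fld Ah S Qh (fun _ => 0) (fun _ => 0) t w
      = fld Ah S Qh Dh qh t (z + w) := by
  simp only [fld, Prod.mk_add_mk]
  rw [Prod.ext_iff]
  constructor <;> · simp only; funext i; simp [Matrix.mulVec_add]; ring

lemma fld_smul (Ah S Qh : ℝ → Mat d) (t : ℝ) (r : ℝ) (z : Vec d × Vec d) :
    r • fld Ah S Qh (fun _ => 0) (fun _ => 0) t z
      = fld Ah S Qh (fun _ => 0) (fun _ => 0) t (r • z) := by
  simp only [fld, Prod.smul_mk]
  rw [Prod.ext_iff]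
  constructor <;> · simp only; funext i; simp [Matrix.mulVec_smul]; ring

lemma fld_lip {Ah S Qh : ℝ → Mat d} {Dh qh : ℝ → Vec d} {a b : ℝ}
    (hA : ContinuousOn Ah (Icc a b)) (hS : ContinuousOn S (Icc a b))
    (hQ : ContinuousOn Qh (Icc a b)) :
    ∃ K : NNReal, ∀ t ∈ Icc a b, LipschitzWith K (fld Ah S Qh Dh qh t) := by
  obtain ⟨CA, hCA⟩ := (isCompact_Icc (a := a) (b := b)).exists_bound_of_continuousOn hA
  obtain ⟨CS, hCS⟩ := (isCompact_Icc (a := a) (b := b)).exists_bound_of_continuousOn hS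
  obtain ⟨CQ, hCQ⟩ := (isCompact_Icc (a := a) (b := b)).exists_bound_of_continuousOn hQ
  set Kc : ℝ := d * (max CA 0) + d * (max CS 0) + d * (max CQ 0) with hKc
  have hKc0 : 0 ≤ Kc := by positivity
  refine ⟨⟨Kc, hKc0⟩, fun t ht => ?_⟩
  apply LipschitzWith.of_dist_le_mul
  intro z w
  rw [dist_eq_norm, dist_eq_norm, fld_sub]
  change _ ≤ Kc * _
  set u : Vec d × Vec d := z - w with hu
  have hu1 : ‖u.1‖ ≤ ‖u‖ := norm_fst_le u
  have hu2 : ‖u.2‖ ≤ ‖u‖ := norm_snd_le u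
  have hAb : ‖Ah t‖ ≤ max CA 0 := le_max_of_le_left (hCA t ht)
  have hSb : ‖S t‖ ≤ max CS 0 := le_max_of_le_left (hCS t ht)
  have hQb : ‖Qh t‖ ≤ max CQ 0 := le_max_of_le_left (hCQ t ht)
  have hAb' : ‖(Ah t)ᵀ‖ ≤ max CA 0 := by rw [norm_transpose_eq]; exact hAb
  have bd : ∀ (M : Mat d) (x : Vec d) (C : ℝ), ‖M‖ ≤ C → ‖x‖ ≤ ‖u‖ →
      ‖M *ᵥ x‖ ≤ (d * C) * ‖u‖ := by
    intro M x C hM hx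
    calc ‖M *ᵥ x‖ ≤ (Fintype.card (Fin d)) * ‖M‖ * ‖x‖ := norm_mulVec_le M x
      _ ≤ d * C * ‖u‖ := by
          rw [Fintype.card_fin]
          have h0C : (0:ℝ) ≤ C := le_trans (norm_nonneg M) hM
          apply mul_le_mul _ hx (norm_nonneg x) (by positivity)
          exact mul_le_mul_of_nonneg_left hM (by positivity)
  have h1 : ‖Ah t *ᵥ u.1 - S t *ᵥ u.2 + (fun _ => (0 : Vec d)) t‖ ≤ Kc * ‖u‖ := by
    have := bd (Ah t) u.1 _ hAb hu1
    have := bd (S t) u.2 _ hSb hu2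
    calc ‖Ah t *ᵥ u.1 - S t *ᵥ u.2 + (fun _ => (0 : Vec d)) t‖
        = ‖Ah t *ᵥ u.1 - S t *ᵥ u.2‖ := by norm_num
      _ ≤ ‖Ah t *ᵥ u.1‖ + ‖S t *ᵥ u.2‖ := norm_sub_le _ _
      _ ≤ d * max CA 0 * ‖u‖ + d * max CS 0 * ‖u‖ := by
          apply add_le_add (bd _ _ _ hAb hu1) (bd _ _ _ hSb hu2)
      _ ≤ Kc * ‖u‖ := by
          rw [hKc]
          have : (0:ℝ) ≤ d * max CQ 0 := by positivity
          nlinarith [norm_nonneg u]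
  have h2 : ‖-(Qh t *ᵥ u.1 + (Ah t)ᵀ *ᵥ u.2 + (fun _ => (0 : Vec d)) t)‖ ≤ Kc * ‖u‖ := by
    calc ‖-(Qh t *ᵥ u.1 + (Ah t)ᵀ *ᵥ u.2 + (fun _ => (0 : Vec d)) t)‖
        = ‖Qh t *ᵥ u.1 + (Ah t)ᵀ *ᵥ u.2‖ := by rw [norm_neg]; norm_num
      _ ≤ ‖Qh t *ᵥ u.1‖ + ‖(Ah t)ᵀ *ᵥ u.2‖ := norm_add_le _ _
      _ ≤ d * max CQ 0 * ‖u‖ + d * max CA 0 * ‖u‖ := by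
          apply add_le_add (bd _ _ _ hQb hu1) (bd _ _ _ hAb' hu2)
      _ ≤ Kc * ‖u‖ := by
          rw [hKc]
          have : (0:ℝ) ≤ d * max CS 0 := by positivity
          nlinarith [norm_nonneg u]
  calc ‖fld Ah S Qh (fun _ => 0) (fun _ => 0) t u‖
      = max ‖Ah t *ᵥ u.1 - S t *ᵥ u.2 + (fun _ => (0 : Vec d)) t‖
          ‖-(Qh t *ᵥ u.1 + (Ah t)ᵀ *ᵥ u.2 + (fun _ => (0 : Vec d)) t)‖ := by
        rw [fld, Prod.norm_def]
    _ ≤ Kc * ‖u‖ := max_le h1 h2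
  -- done

lemma fld_cont {Ah S Qh : ℝ → Mat d} {Dh qh : ℝ → Vec d} {a b : ℝ}
    (hA : ContinuousOn Ah (Icc a b)) (hS : ContinuousOn S (Icc a b))
    (hQ : ContinuousOn Qh (Icc a b))
    (hD : ContinuousOn Dh (Icc a b)) (hq : ContinuousOn qh (Icc a b)) :
    ∀ z, ContinuousOn (fun t => fld Ah S Qh Dh qh t z) (Icc a b) := by
  intro z
  apply ContinuousOn.prodMk
  · exact ((contOn_mulVec_s12 hA continuousOn_const).sub
      (contOn_mulVec_s12 hS continuousOn_const)).add hD
  · exact (((contOn_mulVec_s12 hQ continuousOn_const).add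
      (contOn_mulVec_s12 (contOn_transpose hA) continuousOn_const)).add hq).neg

end fld

section energy
variable {d : ℕ}

lemma lin_lip {M : ℝ → Mat d} {a b : ℝ} (hM : ContinuousOn M (Icc a b)) :
    ∃ K : NNReal, ∀ t ∈ Icc a b, LipschitzWith K (fun x : Vec d => M t *ᵥ x) := by
  obtain ⟨C, hC⟩ := (isCompact_Icc (a := a) (b := b)).exists_bound_of_continuousOn hM
  have h0 : (0:ℝ) ≤ d * max C 0 := by positivity
  refine ⟨⟨d * max C 0, h0⟩, fun t ht => ?_⟩
  apply LipschitzWith.of_dist_le_mul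
  intro x y
  rw [dist_eq_norm, dist_eq_norm, ← Matrix.mulVec_sub]
  change _ ≤ (d * max C 0) * _
  calc ‖M t *ᵥ (x - y)‖ ≤ (Fintype.card (Fin d)) * ‖M t‖ * ‖x - y‖ := norm_mulVec_le _ _
    _ ≤ d * max C 0 * ‖x - y‖ := by
        rw [Fintype.card_fin]
        apply mul_le_mul_of_nonneg_right _ (norm_nonneg _)
        exact mul_le_mul_of_nonneg_left (le_max_of_le_left (hC t ht)) (by positivity)

lemma dot_shift (A : Mat d) (x y : Vec d) : (A *ᵥ x) ⬝ᵥ y = x ⬝ᵥ (Aᵀ *ᵥ y) := by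
  rw [dotProduct_comm, Matrix.dotProduct_mulVec, Matrix.mulVec_transpose,
    dotProduct_comm]

lemma energy_uniq {T : ℝ} (hT : 0 < T)
    {Ah S Qh : ℝ → Mat d} {Dh qh : ℝ → Vec d} {G : Mat d}
    (hA : ContinuousOn Ah (Icc 0 T))
    (hSpsd : ∀ t ∈ Icc 0 T, (S t).PosSemidef)
    (hQpsd : ∀ t ∈ Icc 0 T, (Qh t).PosSemidef)
    (hG : G.PosSemidef)
    {f g : ℝ → Vec d × Vec d}
    (hf : ∀ t ∈ Icc 0 T, HasDerivWithinAt f (fld Ah S Qh Dh qh t (f t)) (Icc 0 T) t)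
    (hg : ∀ t ∈ Icc 0 T, HasDerivWithinAt g (fld Ah S Qh Dh qh t (g t)) (Icc 0 T) t)
    (h0 : (f 0).1 = (g 0).1)
    (hT2 : (f T).2 - G *ᵥ (f T).1 = (g T).2 - G *ᵥ (g T).1) :
    EqOn f g (Icc 0 T) := by
  have hT0 : (0:ℝ) ∈ Icc 0 T := ⟨le_refl 0, hT.le⟩
  have hTT : T ∈ Icc 0 T := ⟨hT.le, le_refl T⟩
  set δ : ℝ → Vec d × Vec d := fun t => f t - g t with hδ
  have hδd : ∀ t ∈ Icc 0 T,
      HasDerivWithinAt δ (fld Ah S Qh (fun _ => 0) (fun _ => 0) t (δ t)) (Icc 0 T) t := by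
    intro t ht
    have := (hf t ht).sub (hg t ht)
    rwa [fld_sub] at this
  set δ1 : ℝ → Vec d := fun t => (δ t).1 with hδ1def
  set δ2 : ℝ → Vec d := fun t => (δ t).2 with hδ2def
  have hδ1d : ∀ t ∈ Icc 0 T, HasDerivWithinAt δ1
      (Ah t *ᵥ δ1 t - S t *ᵥ δ2 t + (fun _ => (0 : Vec d)) t) (Icc 0 T) t := by
    intro t ht
    exact ((ContinuousLinearMap.fst ℝ (Vec d) (Vec d)).hasFDerivAt).comp_hasDerivWithinAt t
      (hδd t ht)
  have hδ2d : ∀ t ∈ Icc 0 T, HasDerivWithinAt δ2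
      (-(Qh t *ᵥ δ1 t + (Ah t)ᵀ *ᵥ δ2 t + (fun _ => (0 : Vec d)) t)) (Icc 0 T) t := by
    intro t ht
    exact ((ContinuousLinearMap.snd ℝ (Vec d) (Vec d)).hasFDerivAt).comp_hasDerivWithinAt t
      (hδd t ht)
  set φ : ℝ → ℝ := fun t => δ1 t ⬝ᵥ δ2 t with hφ
  set e : ℝ → ℝ := fun t => δ2 t ⬝ᵥ (S t *ᵥ δ2 t) + δ1 t ⬝ᵥ (Qh t *ᵥ δ1 t) with he
  have hφd : ∀ t ∈ Icc 0 T, HasDerivWithinAt φ (-(e t)) (Icc 0 T) t := by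
    intro t ht
    have h1 := hasDerivWithinAt_dotProduct (hδ1d t ht) (hδ2d t ht)
    have key : (Ah t *ᵥ δ1 t - S t *ᵥ δ2 t + (fun _ => (0 : Vec d)) t) ⬝ᵥ δ2 t
        + δ1 t ⬝ᵥ (-(Qh t *ᵥ δ1 t + (Ah t)ᵀ *ᵥ δ2 t + (fun _ => (0 : Vec d)) t)) = -(e t) := by
      have hid := dot_shift (Ah t) (δ1 t) (δ2 t)
      have hcm : (S t *ᵥ δ2 t) ⬝ᵥ δ2 t = δ2 t ⬝ᵥ (S t *ᵥ δ2 t) := dotProduct_comm _ _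
      simp only [he, add_dotProduct, sub_dotProduct, dotProduct_neg,
        dotProduct_add, zero_dotProduct, dotProduct_zero]
      linarith
    rw [← key]
    exact h1
  have enn : ∀ t ∈ Icc 0 T, 0 ≤ e t := by
    intro t ht
    have h1 : 0 ≤ δ2 t ⬝ᵥ (S t *ᵥ δ2 t) := by simpa using (hSpsd t ht).dotProduct_mulVec_nonneg (δ2 t)
    have h2 : 0 ≤ δ1 t ⬝ᵥ (Qh t *ᵥ δ1 t) := by simpa using (hQpsd t ht).dotProduct_mulVec_nonneg (δ1 t)
    rw [he]; positivity
  have hφc : ContinuousOn φ (Icc 0 T) := fun t ht => (hφd t ht).continuousWithinAt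
  have hanti : AntitoneOn φ (Icc 0 T) := by
    apply antitoneOn_of_deriv_nonpos (convex_Icc 0 T) hφc
    · intro t ht
      rw [interior_Icc] at ht
      exact ((hφd t (Ioo_subset_Icc_self ht)).hasDerivAt
        (Icc_mem_nhds ht.1 ht.2)).differentiableAt.differentiableWithinAt
    · intro t ht
      rw [interior_Icc] at ht
      have := ((hφd t (Ioo_subset_Icc_self ht)).hasDerivAt (Icc_mem_nhds ht.1 ht.2)).deriv
      rw [this]
      simp [enn t (Ioo_subset_Icc_self ht)]
  have hδ10 : δ1 0 = 0 := by
    simp [hδ1def, hδ, Prod.fst_sub, h0]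
  have hδ2T : δ2 T = G *ᵥ δ1 T := by
    have h' := sub_eq_sub_iff_sub_eq_sub.mp hT2
    simp only [hδ2def, hδ1def, hδ, Prod.snd_sub, Prod.fst_sub, Matrix.mulVec_sub]
    exact h'
  have hφ00 : φ 0 = 0 := by simp [hφ, hδ10]
  have hφT : 0 ≤ φ T := by
    rw [hφ]
    simp only
    rw [hδ2T]
    simpa using hG.dotProduct_mulVec_nonneg (δ1 T)
  have hφTle : φ T ≤ 0 := hφ00 ▸ hanti hT0 hTT hT.le
  have hφz : ∀ t ∈ Icc 0 T, φ t = 0 := by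
    intro t ht
    have h1 : φ t ≤ φ 0 := hanti hT0 ht ht.1
    have h2 : φ T ≤ φ t := hanti ht hTT ht.2
    linarith
  have hez : ∀ t ∈ Icc 0 T, e t = 0 := by
    intro t ht
    have hzero : HasDerivWithinAt φ 0 (Icc 0 T) t :=
      (hasDerivWithinAt_const t (Icc 0 T) (0:ℝ)).congr (fun u hu => hφz u hu) (hφz t ht)
    have huniq := UniqueDiffWithinAt.eq_deriv _ ((uniqueDiffOn_Icc hT) t ht) (hφd t ht) hzero
    linarith [huniq]
  have hSδ2 : ∀ t ∈ Icc 0 T, S t *ᵥ δ2 t = 0 := by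
    intro t ht
    have h1 : 0 ≤ δ2 t ⬝ᵥ (S t *ᵥ δ2 t) := by simpa using (hSpsd t ht).dotProduct_mulVec_nonneg (δ2 t)
    have h2 : 0 ≤ δ1 t ⬝ᵥ (Qh t *ᵥ δ1 t) := by simpa using (hQpsd t ht).dotProduct_mulVec_nonneg (δ1 t)
    have h3 : δ2 t ⬝ᵥ (S t *ᵥ δ2 t) = 0 := by
      have h4 := hez t ht
      rw [he] at h4
      simp only at h4
      linarith
    exact ((hSpsd t ht).dotProduct_mulVec_zero_iff (δ2 t)).mp (by simpa using h3)
  obtain ⟨K1, hK1⟩ := lin_lip (a := 0) (b := T) hA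
  have hδ1d' : ∀ t ∈ Icc 0 T, HasDerivWithinAt δ1 (Ah t *ᵥ δ1 t) (Icc 0 T) t := by
    intro t ht
    have h5 := hδ1d t ht
    rw [hSδ2 t ht] at h5
    simpa using h5
  have hz1 : ∀ t ∈ Icc 0 T,
      HasDerivWithinAt (fun _ : ℝ => (0 : Vec d)) (Ah t *ᵥ (0 : Vec d)) (Icc 0 T) t := by
    intro t ht
    rw [Matrix.mulVec_zero]
    exact hasDerivWithinAt_const t (Icc 0 T) (0 : Vec d)
  have hδ1z : EqOn δ1 (fun _ => (0 : Vec d)) (Icc 0 T) :=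
    ode_uniq_Icc (v := fun t x => Ah t *ᵥ x) hK1 hT0 hδ1d' hz1 (by rw [hδ10])
  obtain ⟨K2, hK2⟩ := lin_lip (a := 0) (b := T) (contOn_transpose hA)
  have hK2' : ∀ t ∈ Icc 0 T, LipschitzWith K2 (fun x : Vec d => -((Ah t)ᵀ *ᵥ x)) :=
    fun t ht => (hK2 t ht).neg
  have hδ2d' : ∀ t ∈ Icc 0 T, HasDerivWithinAt δ2 (-((Ah t)ᵀ *ᵥ δ2 t)) (Icc 0 T) t := by
    intro t ht
    have h5 := hδ2d t ht
    have h6 : δ1 t = 0 := hδ1z ht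
    rw [h6] at h5
    simpa using h5
  have hz2 : ∀ t ∈ Icc 0 T,
      HasDerivWithinAt (fun _ : ℝ => (0 : Vec d)) (-((Ah t)ᵀ *ᵥ (0 : Vec d))) (Icc 0 T) t := by
    intro t ht
    rw [Matrix.mulVec_zero, neg_zero]
    exact hasDerivWithinAt_const t (Icc 0 T) (0 : Vec d)
  have hδ2z : EqOn δ2 (fun _ => (0 : Vec d)) (Icc 0 T) :=
    ode_uniq_Icc (v := fun t x => -((Ah t)ᵀ *ᵥ x)) hK2' hTT hδ2d' hz2
      (by rw [hδ2T, hδ1z hTT]; simp)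
  intro t ht
  have hone : δ t = 0 := by
    rw [Prod.ext_iff]
    exact ⟨by simpa using hδ1z ht, by simpa using hδ2z ht⟩
  have : f t - g t = 0 := hone
  exact sub_eq_zero.mp this

end energy

section psym
variable {d : ℕ}

lemma matmul_bound {A B : Mat d} {CA CB : ℝ} (hA : ‖A‖ ≤ CA) (hB : ‖B‖ ≤ CB)
    (hCA : 0 ≤ CA) (hCB : 0 ≤ CB) : ‖A * B‖ ≤ d * CA * CB := by
  refine (norm_matmul_le A B).trans ?_
  rw [Fintype.card_fin]
  exact mul_le_mul (mul_le_mul_of_nonneg_left hA (Nat.cast_nonneg d)) hB (norm_nonneg B)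
    (by positivity)

lemma P_symm {T : ℝ} (hT : 0 < T) {Ah S Qh : ℝ → Mat d} {G : Mat d}
    (hA : ContinuousOn Ah (Icc 0 T)) (hS : ContinuousOn S (Icc 0 T))
    (hSsym : ∀ t ∈ Icc 0 T, (S t)ᵀ = S t) (hQsym : ∀ t ∈ Icc 0 T, (Qh t)ᵀ = Qh t)
    (hGsym : Gᵀ = G) {P : ℝ → Mat d}
    (hPd : ∀ t ∈ Icc 0 T, HasDerivWithinAt P
      (-(P t * Ah t + (Ah t)ᵀ * P t - P t * S t * P t + Qh t)) (Icc 0 T) t)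
    (hPT : P T = G) : ∀ t ∈ Icc 0 T, (P t)ᵀ = P t := by
  have hPc : ContinuousOn P (Icc 0 T) := contOn_of_derivIcc hPd
  obtain ⟨ρ0, hρ0⟩ := (isCompact_Icc (a := (0:ℝ)) (b := T)).exists_bound_of_continuousOn hPc
  set ρ : ℝ := max ρ0 0 with hρdef
  have hρnn : 0 ≤ ρ := le_max_right _ _
  have hρ : ∀ t ∈ Icc 0 T, ‖P t‖ ≤ ρ := fun t ht => le_max_of_le_left (hρ0 t ht)
  set π : ℝ → ℝ := fun s => max 0 (min s T) with hπ
  have hπc : Continuous π := by fun_prop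
  have hπm : ∀ s, π s ∈ Icc 0 T := fun s => ⟨le_max_left _ _, max_le hT.le (min_le_right _ _)⟩
  have hπeq : ∀ s ∈ Icc 0 T, π s = s := fun s hs => by
    simp [hπ, min_eq_left hs.2, max_eq_right hs.1]
  obtain ⟨CA0, hCA0⟩ := (isCompact_Icc (a := (0:ℝ)) (b := T)).exists_bound_of_continuousOn hA
  obtain ⟨CS0, hCS0⟩ := (isCompact_Icc (a := (0:ℝ)) (b := T)).exists_bound_of_continuousOn hS
  set CA : ℝ := max CA0 0 with hCAdef
  set CS : ℝ := max CS0 0 with hCSdef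
  have hCAnn : 0 ≤ CA := le_max_right _ _
  have hCSnn : 0 ≤ CS := le_max_right _ _
  have hCA : ∀ s : ℝ, ‖Ah (π s)‖ ≤ CA := fun s => le_max_of_le_left (hCA0 _ (hπm s))
  have hCS : ∀ s : ℝ, ‖S (π s)‖ ≤ CS := fun s => le_max_of_le_left (hCS0 _ (hπm s))
  set W : ℝ → Mat d → Mat d := fun t X =>
    -(X * Ah (π t) + (Ah (π t))ᵀ * X - X * S (π t) * X + Qh (π t)) with hW
  set Kr : ℝ := d * CA + d * CA + (d * (d * CS * ρ) + d * (d * CS * ρ)) with hKr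
  have hKrnn : 0 ≤ Kr := by positivity
  have hvlip : ∀ t : ℝ, LipschitzOnWith ⟨Kr, hKrnn⟩ (W t) (Metric.closedBall 0 ρ) := by
    intro t
    refine lipschitzOnWith_iff_dist_le_mul.mpr ?_
    intro X hX Y hY
    rw [dist_eq_norm, dist_eq_norm]
    change _ ≤ Kr * _
    have hXρ : ‖X‖ ≤ ρ := by rwa [Metric.mem_closedBall, dist_zero_right] at hX
    have hYρ : ‖Y‖ ≤ ρ := by rwa [Metric.mem_closedBall, dist_zero_right] at hY
    have hdiff : W t X - W t Y = -((X - Y) * Ah (π t)) - (Ah (π t))ᵀ * (X - Y)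
        + ((X - Y) * S (π t) * X + Y * S (π t) * (X - Y)) := by
      rw [hW]
      noncomm_ring
    rw [hdiff]
    have hd0 : (0:ℝ) ≤ d := Nat.cast_nonneg d
    have b1 : ‖(X - Y) * Ah (π t)‖ ≤ d * ‖X - Y‖ * CA :=
      matmul_bound le_rfl (hCA t) (norm_nonneg _) hCAnn
    have b2 : ‖(Ah (π t))ᵀ * (X - Y)‖ ≤ d * CA * ‖X - Y‖ := by
      refine matmul_bound ?_ le_rfl hCAnn (norm_nonneg _)
      rw [norm_transpose_eq]
      exact hCA t
    have b3 : ‖(X - Y) * S (π t) * X‖ ≤ d * (d * ‖X - Y‖ * CS) * ρ :=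
      matmul_bound (matmul_bound le_rfl (hCS t) (norm_nonneg _) hCSnn) hXρ
        (by positivity) hρnn
    have b4 : ‖Y * S (π t) * (X - Y)‖ ≤ d * (d * ρ * CS) * ‖X - Y‖ :=
      matmul_bound (matmul_bound hYρ (hCS t) hρnn hCSnn) le_rfl (by positivity)
        (norm_nonneg _)
    calc ‖-((X - Y) * Ah (π t)) - (Ah (π t))ᵀ * (X - Y)
          + ((X - Y) * S (π t) * X + Y * S (π t) * (X - Y))‖
        ≤ ‖-((X - Y) * Ah (π t)) - (Ah (π t))ᵀ * (X - Y)‖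
          + ‖(X - Y) * S (π t) * X + Y * S (π t) * (X - Y)‖ := norm_add_le _ _
      _ ≤ (‖-((X - Y) * Ah (π t))‖ + ‖(Ah (π t))ᵀ * (X - Y)‖)
          + (‖(X - Y) * S (π t) * X‖ + ‖Y * S (π t) * (X - Y)‖) :=
            add_le_add (norm_sub_le _ _) (norm_add_le _ _)
      _ ≤ (d * ‖X - Y‖ * CA + d * CA * ‖X - Y‖)
          + (d * (d * ‖X - Y‖ * CS) * ρ + d * (d * ρ * CS) * ‖X - Y‖) := by
            rw [norm_neg]
            exact add_le_add (add_le_add b1 b2) (add_le_add b3 b4)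
      _ = Kr * ‖X - Y‖ := by rw [hKr]; ring
  -- P and Pᵀ both solve the (clamped) equation
  have hPW : ∀ t ∈ Icc 0 T, HasDerivWithinAt P (W t (P t)) (Icc 0 T) t := by
    intro t ht
    have := hPd t ht
    rw [hW]
    simp only [hπeq t ht]
    exact this
  have hPtrW : ∀ t ∈ Icc 0 T, HasDerivWithinAt (fun u => (P u)ᵀ) (W t ((P t)ᵀ)) (Icc 0 T) t := by
    intro t ht
    have h1 := (hPd t ht).matrix_transpose
    have h2 : (-(P t * Ah t + (Ah t)ᵀ * P t - P t * S t * P t + Qh t))ᵀ = W t ((P t)ᵀ) := by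
      rw [hW]
      simp only [hπeq t ht, Matrix.transpose_neg, Matrix.transpose_add, Matrix.transpose_sub,
        Matrix.transpose_mul, Matrix.transpose_transpose, hQsym t ht, hSsym t ht]
      noncomm_ring
    rw [← h2]
    exact h1
  have main : EqOn (fun u => (P u)ᵀ) P (Icc 0 T) := by
    apply ODE_solution_unique_of_mem_Icc_left (fun t _ => hvlip t)
    · exact contOn_transpose hPc
    · intro t ht
      exact derivIcc_to_Iic ht.1 ht.2 (hPtrW t ⟨ht.1.le, ht.2⟩)
    · intro t ht
      rw [Metric.mem_closedBall, dist_zero_right, norm_transpose_eq]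
      exact hρ t ⟨ht.1.le, ht.2⟩
    · exact hPc
    · intro t ht
      exact derivIcc_to_Iic ht.1 ht.2 (hPW t ⟨ht.1.le, ht.2⟩)
    · intro t ht
      rw [Metric.mem_closedBall, dist_zero_right]
      exact hρ t ⟨ht.1.le, ht.2⟩
    · simp only [hPT, hGsym]
  exact fun t ht => main ht

end psym


/-- the affine forward–backward ODE system has exactly one pair of continuous
solutions `(x, y)` on `[0,T]`, and `y t = P t x t + Π t` where `P` solves the terminal-value
Riccati equation and `Π` the associated terminal-value linear equation. -/
theorem affine_fbode_existence_uniqueness_decoupling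
    (T : ℝ) (hT : 0 < T) (d κ : ℕ)
    (Ah : ℝ → Mat d) (Bh : ℝ → Matrix (Fin d) (Fin κ) ℝ)
    (Rh : ℝ → Matrix (Fin κ) (Fin κ) ℝ) (Qh : ℝ → Mat d) (Dh qh : ℝ → Vec d)
    (hAh : ContinuousOn Ah (Icc (0:ℝ) T)) (hBh : ContinuousOn Bh (Icc (0:ℝ) T))
    (hRh : ContinuousOn Rh (Icc (0:ℝ) T)) (hQh : ContinuousOn Qh (Icc (0:ℝ) T))
    (hDh : ContinuousOn Dh (Icc (0:ℝ) T)) (hqh : ContinuousOn qh (Icc (0:ℝ) T))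
    (c : ℝ) (hc : 0 < c)
    (hRpos : ∀ t ∈ Icc (0:ℝ) T,
      (Rh t - c • (1 : Matrix (Fin κ) (Fin κ) ℝ)).PosSemidef)
    (hQpos : ∀ t ∈ Icc (0:ℝ) T, (Qh t).PosSemidef)
    (G : Mat d) (hG : G.PosSemidef) (g ξ : Vec d) :
    ∃ x y : ℝ → Vec d,
      (ContinuousOn x (Icc (0:ℝ) T) ∧ ContinuousOn y (Icc (0:ℝ) T) ∧
        (∀ t ∈ Icc (0:ℝ) T,
          x t = ξ + ∫ s in (0:ℝ)..t,
            (Ah s *ᵥ x s - Bh s *ᵥ ((Rh s)⁻¹ *ᵥ ((Bh s)ᵀ *ᵥ y s)) + Dh s)) ∧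
        (∀ t ∈ Icc (0:ℝ) T,
          y t = G *ᵥ x T + g + ∫ s in t..T,
            (Qh s *ᵥ x s + (Ah s)ᵀ *ᵥ y s + qh s))) ∧
      (∀ x₂ y₂ : ℝ → Vec d,
        (ContinuousOn x₂ (Icc (0:ℝ) T) ∧ ContinuousOn y₂ (Icc (0:ℝ) T) ∧
          (∀ t ∈ Icc (0:ℝ) T,
            x₂ t = ξ + ∫ s in (0:ℝ)..t,
              (Ah s *ᵥ x₂ s - Bh s *ᵥ ((Rh s)⁻¹ *ᵥ ((Bh s)ᵀ *ᵥ y₂ s)) + Dh s)) ∧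
          (∀ t ∈ Icc (0:ℝ) T,
            y₂ t = G *ᵥ x₂ T + g + ∫ s in t..T,
              (Qh s *ᵥ x₂ s + (Ah s)ᵀ *ᵥ y₂ s + qh s))) →
        ∀ t ∈ Icc (0:ℝ) T, x₂ t = x t ∧ y₂ t = y t) ∧
      (∀ (P : ℝ → Mat d) (Pi : ℝ → Vec d),
        ((∀ t ∈ Icc (0:ℝ) T,
          HasDerivWithinAt P
            (-(P t * Ah t + (Ah t)ᵀ * P t - P t * Bh t * (Rh t)⁻¹ * (Bh t)ᵀ * P t + Qh t))
            (Icc (0:ℝ) T) t) ∧ P T = G) →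
        ((∀ t ∈ Icc (0:ℝ) T,
          HasDerivWithinAt Pi
            (-((Ah t - Bh t * (Rh t)⁻¹ * (Bh t)ᵀ * P t)ᵀ *ᵥ Pi t) - P t *ᵥ Dh t - qh t)
            (Icc (0:ℝ) T) t) ∧ Pi T = g) →
        ∀ t ∈ Icc (0:ℝ) T, y t = P t *ᵥ x t + Pi t) := by
  classical
  have hT0 : (0:ℝ) ≤ T := hT.le
  have h0I : (0:ℝ) ∈ Icc (0:ℝ) T := ⟨le_refl 0, hT0⟩
  have hTI : T ∈ Icc (0:ℝ) T := ⟨hT0, le_refl T⟩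
  have hc1 : (c • (1 : Matrix (Fin κ) (Fin κ) ℝ)).PosDef := by
    refine Matrix.PosDef.of_dotProduct_mulVec_pos ?_ ?_
    · simp [Matrix.IsHermitian, Matrix.conjTranspose_smul, Matrix.conjTranspose_one]
    · intro x hx
      have h1 : (star x) ⬝ᵥ ((c • (1 : Matrix (Fin κ) (Fin κ) ℝ)) *ᵥ x)
          = c * ((star x) ⬝ᵥ x) := by
        rw [Matrix.smul_mulVec, Matrix.one_mulVec, dotProduct_smul]
        simp
      rw [h1]
      exact mul_pos hc (Matrix.dotProduct_star_self_pos_iff.mpr hx)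
  have hRpd : ∀ t ∈ Icc (0:ℝ) T, (Rh t).PosDef := by
    intro t ht
    have h := hc1.add_posSemidef (hRpos t ht)
    have h2 : c • (1 : Matrix (Fin κ) (Fin κ) ℝ) + (Rh t - c • 1) = Rh t := by abel
    rwa [h2] at h
  have hRdet : ∀ t ∈ Icc (0:ℝ) T, (Rh t).det ≠ 0 := fun t ht => ne_of_gt (hRpd t ht).det_pos
  have hRinvCont : ContinuousOn (fun t => (Rh t)⁻¹) (Icc (0:ℝ) T) := contOn_inv hRh hRdet
  have hRinvsym : ∀ t ∈ Icc (0:ℝ) T, ((Rh t)⁻¹)ᵀ = (Rh t)⁻¹ := by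
    intro t ht
    have h1 : (Rh t)ᵀ = Rh t := by
      have := (hRpd t ht).1
      rwa [Matrix.IsHermitian, Matrix.conjTranspose_eq_transpose_of_trivial] at this
    rw [Matrix.transpose_nonsing_inv, h1]
  set S : ℝ → Mat d := fun t => Bh t * (Rh t)⁻¹ * (Bh t)ᵀ with hSdef
  have hScont : ContinuousOn S (Icc (0:ℝ) T) :=
    contOn_matmul (contOn_matmul hBh hRinvCont) (contOn_transpose hBh)
  have hSsym : ∀ t ∈ Icc (0:ℝ) T, (S t)ᵀ = S t := by
    intro t ht
    rw [hSdef]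
    simp only [Matrix.transpose_mul, Matrix.transpose_transpose, hRinvsym t ht, Matrix.mul_assoc]
  have hSpsd : ∀ t ∈ Icc (0:ℝ) T, (S t).PosSemidef := by
    intro t ht
    have h := ((hRpd t ht).inv).posSemidef.mul_mul_conjTranspose_same (Bh t)
    rwa [Matrix.conjTranspose_eq_transpose_of_trivial] at h
  have hQsym : ∀ t ∈ Icc (0:ℝ) T, (Qh t)ᵀ = Qh t := by
    intro t ht
    have := (hQpos t ht).1
    rwa [Matrix.IsHermitian, Matrix.conjTranspose_eq_transpose_of_trivial] at this
  have hGsym : Gᵀ = G := by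
    have := hG.1
    rwa [Matrix.IsHermitian, Matrix.conjTranspose_eq_transpose_of_trivial] at this
  obtain ⟨Kf, hKf⟩ := fld_lip (Dh := Dh) (qh := qh) hAh hScont hQh
  obtain ⟨K0, hK0⟩ := fld_lip (Dh := fun _ => (0 : Vec d)) (qh := fun _ => (0 : Vec d))
    hAh hScont hQh
  have hvcont := fld_cont (Dh := Dh) (qh := qh) hAh hScont hQh hDh hqh
  have hv0cont := fld_cont (Dh := fun _ => (0 : Vec d)) (qh := fun _ => (0 : Vec d))
    hAh hScont hQh continuousOn_const continuousOn_const
  have solF : ∀ η : Vec d, ∃ f : ℝ → Vec d × Vec d, f 0 = ((ξ, η) : Vec d × Vec d) ∧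
      ∀ t ∈ Icc (0:ℝ) T, HasDerivWithinAt f (fld Ah S Qh Dh qh t (f t)) (Icc (0:ℝ) T) t :=
    fun η => ode_exists_Icc hT0 hKf hvcont h0I (ξ, η)
  choose F hF0 hFd using solF
  have solH : ∀ η : Vec d, ∃ f : ℝ → Vec d × Vec d, f 0 = ((0, η) : Vec d × Vec d) ∧
      ∀ t ∈ Icc (0:ℝ) T, HasDerivWithinAt f
        (fld Ah S Qh (fun _ => 0) (fun _ => 0) t (f t)) (Icc (0:ℝ) T) t :=
    fun η => ode_exists_Icc hT0 hK0 hv0cont h0I (0, η)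
  choose H hH0 hHd using solH
  have hFH : ∀ η μ : Vec d, EqOn (fun t => F η t + H μ t) (F (η + μ)) (Icc (0:ℝ) T) := by
    intro η μ
    apply ode_uniq_Icc hKf h0I _ (hFd (η + μ))
    · simp only [hF0, hH0, Prod.mk_add_mk, add_zero]
    · intro t ht
      have := (hFd η t ht).add (hHd μ t ht)
      rwa [fld_add] at this
  have hHsmul : ∀ (r : ℝ) (η : Vec d), EqOn (fun t => r • H η t) (H (r • η)) (Icc (0:ℝ) T) := by
    intro r η
    apply ode_uniq_Icc hK0 h0I _ (hHd (r • η))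
    · simp only [hH0, Prod.smul_mk, smul_zero]
    · intro t ht
      have := (hHd η t ht).const_smul r
      rwa [fld_smul] at this
  have hHadd : ∀ η μ : Vec d, EqOn (fun t => H η t + H μ t) (H (η + μ)) (Icc (0:ℝ) T) := by
    intro η μ
    apply ode_uniq_Icc hK0 h0I _ (hHd (η + μ))
    · simp only [hH0, Prod.mk_add_mk, add_zero]
    · intro t ht
      have := (hHd η t ht).add (hHd μ t ht)
      rwa [fld_add (Dh := fun _ => (0 : Vec d)) (qh := fun _ => (0 : Vec d))] at this
  have hzero_sol : ∀ t ∈ Icc (0:ℝ) T, HasDerivWithinAt (fun _ : ℝ => (0 : Vec d × Vec d))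
      (fld Ah S Qh (fun _ => 0) (fun _ => 0) t ((0 : Vec d × Vec d))) (Icc (0:ℝ) T) t := by
    intro t ht
    have hv0 : fld Ah S Qh (fun _ => (0 : Vec d)) (fun _ => (0 : Vec d)) t
        ((0 : Vec d × Vec d)) = 0 := by
      rw [fld]
      simp [Prod.ext_iff]
    rw [hv0]
    exact hasDerivWithinAt_const t (Icc (0:ℝ) T) (0 : Vec d × Vec d)
  set Lm : Vec d → Vec d := fun μ => (H μ T).2 - G *ᵥ (H μ T).1 with hLm
  have hLadd : ∀ η μ, Lm (η + μ) = Lm η + Lm μ := by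
    intro η μ
    have h1 := (hHadd η μ hTI).symm
    simp only at h1
    rw [hLm]
    simp only [h1, Prod.fst_add, Prod.snd_add, Matrix.mulVec_add]
    abel
  have hLsmul : ∀ (r : ℝ) (μ : Vec d), Lm (r • μ) = r • Lm μ := by
    intro r μ
    have h1 := (hHsmul r μ hTI).symm
    simp only at h1
    rw [hLm]
    simp only [h1, Prod.smul_fst, Prod.smul_snd, Matrix.mulVec_smul]
    rw [smul_sub]
  set Lmap : Vec d →ₗ[ℝ] Vec d :=
    { toFun := Lm, map_add' := hLadd, map_smul' := hLsmul } with hLmap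
  have hLinj : Function.Injective Lmap := by
    rw [injective_iff_map_eq_zero]
    intro μ hμ
    have hEq : EqOn (H μ) (fun _ => (0 : Vec d × Vec d)) (Icc (0:ℝ) T) := by
      apply energy_uniq hT hAh hSpsd hQpos hG (hHd μ) hzero_sol
      · rw [hH0]
        simp
      · have h3 : Lm μ = 0 := hμ
        rw [hLm] at h3
        simp only [Prod.fst_zero, Prod.snd_zero, Matrix.mulVec_zero, sub_zero]
        exact h3
    have h2 := hEq h0I
    rw [hH0] at h2
    have := congrArg Prod.snd h2
    simpa using this
  have hLsurj : Function.Surjective Lmap := LinearMap.injective_iff_surjective.mp hLinj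
  obtain ⟨ηs, hηs⟩ := hLsurj (-((F 0 T).2 - G *ᵥ (F 0 T).1 - g))
  set x : ℝ → Vec d := fun t => (F ηs t).1 with hxdef
  set y : ℝ → Vec d := fun t => (F ηs t).2 with hydef
  have hFsplit : F ηs T = F 0 T + H ηs T := by
    have := hFH 0 ηs hTI
    simp only [zero_add] at this
    exact this.symm
  have hterm : (F ηs T).2 - G *ᵥ (F ηs T).1 - g = 0 := by
    have h2 : (H ηs T).2 - G *ᵥ (H ηs T).1 = -((F 0 T).2 - G *ᵥ (F 0 T).1 - g) := hηs
    simp only [hFsplit, Prod.fst_add, Prod.snd_add, Matrix.mulVec_add]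
    have h3 : (F 0 T).2 + (H ηs T).2 - (G *ᵥ (F 0 T).1 + G *ᵥ (H ηs T).1) - g
        = ((F 0 T).2 - G *ᵥ (F 0 T).1 - g) + ((H ηs T).2 - G *ᵥ (H ηs T).1) := by abel
    rw [h3, h2]
    abel
  have hyT : y T = G *ᵥ x T + g := by
    have := hterm
    rw [sub_sub, sub_eq_zero] at this
    exact this
  have hxd : ∀ t ∈ Icc (0:ℝ) T,
      HasDerivWithinAt x (Ah t *ᵥ x t - S t *ᵥ y t + Dh t) (Icc (0:ℝ) T) t := by
    intro t ht
    exact ((ContinuousLinearMap.fst ℝ (Vec d) (Vec d)).hasFDerivAt).comp_hasDerivWithinAt t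
      (hFd ηs t ht)
  have hyd : ∀ t ∈ Icc (0:ℝ) T,
      HasDerivWithinAt y (-(Qh t *ᵥ x t + (Ah t)ᵀ *ᵥ y t + qh t)) (Icc (0:ℝ) T) t := by
    intro t ht
    exact ((ContinuousLinearMap.snd ℝ (Vec d) (Vec d)).hasFDerivAt).comp_hasDerivWithinAt t
      (hFd ηs t ht)
  have hxc : ContinuousOn x (Icc (0:ℝ) T) := fun t ht => (hxd t ht).continuousWithinAt
  have hyc : ContinuousOn y (Icc (0:ℝ) T) := fun t ht => (hyd t ht).continuousWithinAt
  have hFxc : ContinuousOn (fun s => Ah s *ᵥ x s - S s *ᵥ y s + Dh s) (Icc (0:ℝ) T) :=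
    ((contOn_mulVec_s12 hAh hxc).sub (contOn_mulVec_s12 hScont hyc)).add hDh
  have hFyc : ContinuousOn (fun s => Qh s *ᵥ x s + (Ah s)ᵀ *ᵥ y s + qh s) (Icc (0:ℝ) T) :=
    ((contOn_mulVec_s12 hQh hxc).add (contOn_mulVec_s12 (contOn_transpose hAh) hyc)).add hqh
  have hx0 : x 0 = ξ := by
    rw [hxdef]
    simp only [hF0]
  have hxint : ∀ t ∈ Icc (0:ℝ) T,
      x t = ξ + ∫ s in (0:ℝ)..t, (Ah s *ᵥ x s - S s *ᵥ y s + Dh s) := by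
    intro t ht
    have := integral_of_derivIcc hT0 hFxc hxd t ht
    rwa [hx0] at this
  have hyint : ∀ t ∈ Icc (0:ℝ) T,
      y t = G *ᵥ x T + g + ∫ s in t..T, (Qh s *ᵥ x s + (Ah s)ᵀ *ᵥ y s + qh s) := by
    intro t ht
    have h1 := integral_of_derivIcc' hT0 hFyc.neg hyd t ht
    simp only [Pi.neg_apply] at h1
    rw [intervalIntegral.integral_neg, sub_neg_eq_add, hyT] at h1
    exact h1
  refine ⟨x, y, ⟨hxc, hyc, ?_, ?_⟩, ?_, ?_⟩
  · intro t ht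
    have h1 := hxint t ht
    simp only [hSdef] at h1
    simp only [Matrix.mulVec_mulVec, ← Matrix.mul_assoc]
    exact h1
  · intro t ht
    exact hyint t ht
  · -- uniqueness
    rintro x₂ y₂ ⟨hx₂c, hy₂c, hx₂e, hy₂e⟩
    have hFx₂c : ContinuousOn
        (fun s => Ah s *ᵥ x₂ s - Bh s *ᵥ ((Rh s)⁻¹ *ᵥ ((Bh s)ᵀ *ᵥ y₂ s)) + Dh s)
        (Icc (0:ℝ) T) :=
      ((contOn_mulVec_s12 hAh hx₂c).sub (contOn_mulVec_s12 hBh (contOn_mulVec_s12 hRinvCont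
        (contOn_mulVec_s12 (contOn_transpose hBh) hy₂c)))).add hDh
    have hx₂d := derivIcc_of_integral hFx₂c hx₂e hT0
    have hFy₂c : ContinuousOn (fun s => Qh s *ᵥ x₂ s + (Ah s)ᵀ *ᵥ y₂ s + qh s)
        (Icc (0:ℝ) T) :=
      ((contOn_mulVec_s12 hQh hx₂c).add (contOn_mulVec_s12 (contOn_transpose hAh) hy₂c)).add hqh
    have hy₂e' : ∀ t ∈ Icc (0:ℝ) T, y₂ t
        = (G *ᵥ x₂ T + g + ∫ s in (0:ℝ)..T, (Qh s *ᵥ x₂ s + (Ah s)ᵀ *ᵥ y₂ s + qh s))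
          + ∫ s in (0:ℝ)..t, (-(Qh s *ᵥ x₂ s + (Ah s)ᵀ *ᵥ y₂ s + qh s)) := by
      intro t ht
      rw [hy₂e t ht, intervalIntegral.integral_neg]
      have hsub : (∫ s in (0:ℝ)..T, (Qh s *ᵥ x₂ s + (Ah s)ᵀ *ᵥ y₂ s + qh s))
          - (∫ s in (0:ℝ)..t, (Qh s *ᵥ x₂ s + (Ah s)ᵀ *ᵥ y₂ s + qh s))
          = ∫ s in t..T, (Qh s *ᵥ x₂ s + (Ah s)ᵀ *ᵥ y₂ s + qh s) :=
        intervalIntegral.integral_interval_sub_left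
          (hFy₂c.intervalIntegrable_of_Icc hT0)
          ((hFy₂c.mono (Icc_subset_Icc_right ht.2)).intervalIntegrable_of_Icc ht.1)
      rw [← hsub]
      abel
    have hy₂d := derivIcc_of_integral hFy₂c.neg hy₂e' hT0
    set Z₂ : ℝ → Vec d × Vec d := fun t => (x₂ t, y₂ t) with hZ₂
    have hZ₂d : ∀ t ∈ Icc (0:ℝ) T,
        HasDerivWithinAt Z₂ (fld Ah S Qh Dh qh t (Z₂ t)) (Icc (0:ℝ) T) t := by
      intro t ht
      have h1 := (hx₂d t ht).prodMk (hy₂d t ht)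
      have h2 : fld Ah S Qh Dh qh t (Z₂ t)
          = (Ah t *ᵥ x₂ t - Bh t *ᵥ ((Rh t)⁻¹ *ᵥ ((Bh t)ᵀ *ᵥ y₂ t)) + Dh t,
             -(Qh t *ᵥ x₂ t + (Ah t)ᵀ *ᵥ y₂ t + qh t)) := by
        rw [fld, hSdef]
        simp only [Matrix.mulVec_mulVec, Matrix.mul_assoc]
        rfl
      rw [h2]
      exact h1
    have hx₂0 : x₂ 0 = ξ := by
      have := hx₂e 0 h0I
      simpa [intervalIntegral.integral_same] using this
    have hy₂T : y₂ T = G *ᵥ x₂ T + g := by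
      have := hy₂e T hTI
      simpa [intervalIntegral.integral_same] using this
    have hEq : EqOn Z₂ (F ηs) (Icc (0:ℝ) T) := by
      apply energy_uniq hT hAh hSpsd hQpos hG hZ₂d (hFd ηs)
      · show x₂ 0 = (F ηs 0).1
        rw [hx₂0, hF0]
      · show y₂ T - G *ᵥ x₂ T = (F ηs T).2 - G *ᵥ (F ηs T).1
        rw [hy₂T]
        have h4 : (F ηs T).2 - G *ᵥ (F ηs T).1 = g := by
          have h7 : (F ηs T).2 = G *ᵥ (F ηs T).1 + g := hyT
          rw [h7]
          abel
        rw [h4]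
        abel
    intro t ht
    have h5 := hEq ht
    exact ⟨congrArg Prod.fst h5, congrArg Prod.snd h5⟩
  · -- decoupling
    rintro P Pi ⟨hPd, hPT⟩ ⟨hPid, hPiT⟩
    have hPd' : ∀ t ∈ Icc (0:ℝ) T, HasDerivWithinAt P
        (-(P t * Ah t + (Ah t)ᵀ * P t - P t * S t * P t + Qh t)) (Icc (0:ℝ) T) t := by
      intro t ht
      have h1 := hPd t ht
      have he : P t * Bh t * (Rh t)⁻¹ * (Bh t)ᵀ * P t = P t * S t * P t := by
        rw [hSdef]
        simp only [Matrix.mul_assoc]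
      rwa [he] at h1
    have hPsym := P_symm hT hAh hScont hSsym hQsym hGsym hPd' hPT
    have hPc : ContinuousOn P (Icc (0:ℝ) T) := contOn_of_derivIcc hPd'
    have hPid' : ∀ t ∈ Icc (0:ℝ) T, HasDerivWithinAt Pi
        (-((Ah t - S t * P t)ᵀ *ᵥ Pi t) - P t *ᵥ Dh t - qh t) (Icc (0:ℝ) T) t := by
      intro t ht
      have h1 := hPid t ht
      have he : Ah t - Bh t * (Rh t)⁻¹ * (Bh t)ᵀ * P t = Ah t - S t * P t := by
        rw [hSdef]
      rwa [he] at h1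
    set z : ℝ → Vec d := fun u => y u - (P u *ᵥ x u + Pi u) with hzdef
    have hzd : ∀ t ∈ Icc (0:ℝ) T,
        HasDerivWithinAt z (-((Ah t - S t * P t)ᵀ *ᵥ z t)) (Icc (0:ℝ) T) t := by
      intro t ht
      have hmv := hasDerivWithinAt_mulVec (hPd' t ht) (hxd t ht)
      have htot := (hyd t ht).sub (hmv.add (hPid' t ht))
      have hval : (-(Qh t *ᵥ x t + (Ah t)ᵀ *ᵥ y t + qh t))
          - ((-(P t * Ah t + (Ah t)ᵀ * P t - P t * S t * P t + Qh t)) *ᵥ x t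
            + P t *ᵥ (Ah t *ᵥ x t - S t *ᵥ y t + Dh t)
            + (-((Ah t - S t * P t)ᵀ *ᵥ Pi t) - P t *ᵥ Dh t - qh t))
          = -((Ah t - S t * P t)ᵀ *ᵥ z t) := by
        rw [hzdef]
        simp only [Matrix.transpose_sub, Matrix.transpose_mul, hPsym t ht, hSsym t ht,
          Matrix.sub_mulVec, Matrix.add_mulVec, Matrix.neg_mulVec, Matrix.mulVec_add,
          Matrix.mulVec_sub, ← Matrix.mulVec_mulVec]
        abel
      rw [← hval]
      exact htot
    obtain ⟨Kz, hKz⟩ := lin_lip (a := (0:ℝ)) (b := T)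
      (contOn_transpose (hAh.sub (contOn_matmul hScont hPc)))
    have hKz' : ∀ t ∈ Icc (0:ℝ) T,
        LipschitzWith Kz (fun ζ : Vec d => -((Ah t - S t * P t)ᵀ *ᵥ ζ)) :=
      fun t ht => (hKz t ht).neg
    have hzT : z T = 0 := by
      show y T - (P T *ᵥ x T + Pi T) = 0
      rw [hyT, hPT, hPiT]
      abel
    have hz0sol : ∀ t ∈ Icc (0:ℝ) T, HasDerivWithinAt (fun _ : ℝ => (0 : Vec d))
        (-((Ah t - S t * P t)ᵀ *ᵥ (0 : Vec d))) (Icc (0:ℝ) T) t := by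
      intro t ht
      rw [Matrix.mulVec_zero, neg_zero]
      exact hasDerivWithinAt_const t (Icc (0:ℝ) T) (0 : Vec d)
    have hzz : EqOn z (fun _ => (0 : Vec d)) (Icc (0:ℝ) T) :=
      ode_uniq_Icc (v := fun t ζ => -((Ah t - S t * P t)ᵀ *ᵥ ζ)) hKz' hTI hzd hz0sol
        (by rw [hzT])
    intro t ht
    have h6 : y t - (P t *ᵥ x t + Pi t) = 0 := hzz ht
    exact sub_eq_zero.mp h6
end
end

section
/- Let the LQ coefficients and smooth common-noise coefficients N, Γ be given, assume Q_t + Q̄_t − Q̄_t S_t ⪰ 0 for every t and Q + Q̄ − Q̄S ⪰ 0, and suppose the unique C¹ solution e : [0,T] → ℝ^{d×d} of de_t/dt = (C_t + Γ_t)ᵀ e_t, e_0 = Id, satisfies e_t = λ_t·Id for some λ_t > 0 for every t ∈ [0,T]. If p̃ : [0,T] → ℝ^{d×d} is a C¹ solution of the symmetric terminal-value Riccati equation −dp̃_t/dt = p̃_t(N_t + Γ_t + A_t + C_t) + (N_t + Γ_t + A_t + C_t)ᵀ p̃_t − λ_t · p̃_t B_t R_t⁻¹ B_tᵀ p̃_t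 + λ_t⁻¹ (Q_t + Q̄_t − Q̄_t S_t), p̃_T = λ_T⁻¹ (Q + Q̄ − Q̄S), then p̄_t := e_t p̃_t = λ_t p̃_t is a C¹ solution of the non-symmetric Riccati equation −dp̄_t/dt = p̄_t(N_t + Γ_t + A_t + C_t) + (N_t + A_t)ᵀ p̄_t − p̄_t B_t R_t⁻¹ B_tᵀ p̄_t + Q_t + Q̄_t − Q̄_t S_t, with p̄_T = Q + Q̄ − Q̄S. -/
open MeasureTheory Matrix Set

noncomputable section

attribute [local instance] Matrix.normedAddCommGroup Matrix.normedSpace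

lemma matmul_deriv {d : ℕ} {f g : ℝ → Mat d}
    {f' g' : Mat d} {s : Set ℝ} {t : ℝ}
    (hf : HasDerivWithinAt f f' s t) (hg : HasDerivWithinAt g g' s t) :
    HasDerivWithinAt (fun u => f u * g u) (f' * g t + f t * g') s t := by
  refine hasDerivWithinAt_pi.2 ?_
  intro i
  refine hasDerivWithinAt_pi.2 ?_
  intro j
  have hfe : ∀ a b, HasDerivWithinAt (fun u => f u a b) (f' a b) s t := by
    intro a b
    exact (hasDerivWithinAt_pi.1 ((hasDerivWithinAt_pi.1 hf) a)) b
  have hge : ∀ a b, HasDerivWithinAt (fun u => g u a b) (g' a b) s t := by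
    intro a b
    exact (hasDerivWithinAt_pi.1 ((hasDerivWithinAt_pi.1 hg) a)) b
  have key : HasDerivWithinAt (fun u => ∑ k, f u i k * g u k j)
      (∑ k, (f' i k * g t k j + f t i k * g' k j)) s t :=
    HasDerivWithinAt.fun_sum fun k _ => (hfe i k).mul (hge k j)
  convert key using 1
  · rfl
  · rfl
  · funext u; simp [Matrix.mul_apply]
  simp [Matrix.mul_apply, Matrix.add_apply, Finset.sum_add_distrib]

/-- if the solution `e` of `de/dt = (C+Γ)ᵀ e`, `e₀ = Id` is a positive scalar
multiple `λ_t·Id` of the identity, then `p̄ := e·p̃ = λ·p̃` transforms any solution `p̃` of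
the symmetric terminal-value Riccati equation into a solution of the non-symmetric Riccati
equation with terminal value `Q + Q̄ − Q̄S`. -/
theorem symmetric_to_nonsymmetric_riccati
    (T : ℝ) (hT : 0 < T) (d κ : ℕ)
    (A C : ℝ → Mat d) (B : ℝ → Matrix (Fin d) (Fin κ) ℝ)
    (R : ℝ → Matrix (Fin κ) (Fin κ) ℝ) (Qt Qbt St : ℝ → Mat d)
    (Q Qb S : Mat d) (lam0 : ℝ) (hlam0 : 0 < lam0)
    (hA : ContinuousOn A (Icc (0:ℝ) T)) (hC : ContinuousOn C (Icc (0:ℝ) T))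
    (hB : ContinuousOn B (Icc (0:ℝ) T)) (hR : ContinuousOn R (Icc (0:ℝ) T))
    (hQt : ContinuousOn Qt (Icc (0:ℝ) T)) (hQbt : ContinuousOn Qbt (Icc (0:ℝ) T))
    (hSt : ContinuousOn St (Icc (0:ℝ) T))
    (hRpos : ∀ t ∈ Icc (0:ℝ) T, (R t - lam0 • (1 : Matrix (Fin κ) (Fin κ) ℝ)).PosSemidef)
    (hQtpos : ∀ t ∈ Icc (0:ℝ) T, (Qt t).PosSemidef)
    (hQbtpos : ∀ t ∈ Icc (0:ℝ) T, (Qbt t).PosSemidef)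
    (hQpos : Q.PosSemidef) (hQbpos : Qb.PosSemidef)
    -- smooth common-noise coefficients:
    (N Γ : ℝ → Mat d)
    (hN : ContinuousOn N (Icc (0:ℝ) T)) (hΓ : ContinuousOn Γ (Icc (0:ℝ) T))
    -- positivity of the effective running and terminal costs:
    (hQS : ∀ t ∈ Icc (0:ℝ) T, (Qt t + Qbt t - Qbt t * St t).PosSemidef)
    (hQST : (Q + Qb - Qb * S).PosSemidef)
    -- the solution of `de/dt = (C+Γ)ᵀ e`, `e₀ = Id`, assumed scalar:
    (e : ℝ → Mat d) (lam : ℝ → ℝ)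
    (he : ∀ t ∈ Icc (0:ℝ) T,
      HasDerivWithinAt e ((C t + Γ t)ᵀ * e t) (Icc (0:ℝ) T) t)
    (he0 : e 0 = 1)
    (hescalar : ∀ t ∈ Icc (0:ℝ) T, e t = lam t • (1 : Mat d) ∧ 0 < lam t)
    -- `p̃` solves the symmetric terminal-value Riccati equation:
    (ptil : ℝ → Mat d)
    (hptil : ∀ t ∈ Icc (0:ℝ) T,
      HasDerivWithinAt ptil
        (-(ptil t * (N t + Γ t + A t + C t) + (N t + Γ t + A t + C t)ᵀ * ptil t
            - lam t • (ptil t * B t * (R t)⁻¹ * (B t)ᵀ * ptil t)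
            + (lam t)⁻¹ • (Qt t + Qbt t - Qbt t * St t)))
        (Icc (0:ℝ) T) t)
    (hptilT : ptil T = (lam T)⁻¹ • (Q + Qb - Qb * S)) :
    (∀ t ∈ Icc (0:ℝ) T,
      HasDerivWithinAt (fun u => e u * ptil u)
        (-((e t * ptil t) * (N t + Γ t + A t + C t) + (N t + A t)ᵀ * (e t * ptil t)
            - (e t * ptil t) * B t * (R t)⁻¹ * (B t)ᵀ * (e t * ptil t)
            + (Qt t + Qbt t - Qbt t * St t)))
        (Icc (0:ℝ) T) t) ∧
    e T * ptil T = Q + Qb - Qb * S := by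
  constructor
  · intro t ht
    obtain ⟨hes, hlampos⟩ := hescalar t ht
    have hL : lam t * (lam t)⁻¹ = 1 := mul_inv_cancel₀ hlampos.ne'
    have hd := matmul_deriv (he t ht) (hptil t ht)
    convert hd using 1
    rw [hes]
    simp only [Matrix.smul_mul, Matrix.mul_smul, one_mul, mul_one, smul_smul, hL, one_smul,
      smul_add, smul_sub, smul_neg, neg_add, neg_sub, Matrix.transpose_add, add_mul, mul_add,
      sub_mul, mul_sub]
    match_scalars <;> field_simp <;> ring
  · rw [hptilT, (hescalar T ⟨le_of_lt hT, le_refl T⟩).1]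
    have hL : lam T * (lam T)⁻¹ = 1 :=
      mul_inv_cancel₀ (hescalar T ⟨le_of_lt hT, le_refl T⟩).2.ne'
    rw [Matrix.smul_mul, Matrix.mul_smul, one_mul, smul_smul, hL, one_smul]
end
end
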